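/- arXiv:1301.7717 — 12 statements merged into one kernel-verified Lean document; each statement's English description precedes it below -/
import Mathlib

section
/- If x is an element of a closed convex cone K in a finite-dimensional Euclidean space, then the tangent space of K at x equals the orthogonal complement of the linear span of the conjugate face of face(x,K), i.e., tan(x,K) = (face(x,K)^△)^⊥, where face(x,K) is the minimal face of K containing x, F^△ = K* ∩ F^⊥ is the conjugate face, and tan(x,K) = cl(dir(x,K)) ∩ −cl(dir(x,K)) with dir(x,K) = {y : x + t·y ∈ K for some t > 0}. -/
noncomputable section

/-- The dual cone of a set `S`: all `y` with `⟨x, y⟩ ≥ 0` for every `x ∈ S`. -/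
def dualCone {E : Type*} [NormedAddCommGroup E] [InnerProductSpace ℝ E] (S : Set E) : Set E :=
  {y | ∀ x ∈ S, 0 ≤ (inner ℝ x y : ℝ)}

/-- The orthogonal complement of the linear span of a set `S`. -/
def perpSpan {E : Type*} [NormedAddCommGroup E] [InnerProductSpace ℝ E] (S : Set E) : Set E :=
  {y | ∀ x ∈ S, (inner ℝ x y : ℝ) = 0}

/-- The cone of feasible directions of `C` at `x`. -/
def dirCone {E : Type*} [AddCommGroup E] [Module ℝ E] (x : E) (C : Set E) : Set E :=
  {y | ∃ t : ℝ, 0 < t ∧ x + t • y ∈ C}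

/-- The tangent space of `C` at `x`: `cl(dir(x,C)) ∩ −cl(dir(x,C))`. -/
def tanSpace {E : Type*} [AddCommGroup E] [Module ℝ E] [TopologicalSpace E]
    (x : E) (C : Set E) : Set E :=
  closure (dirCone x C) ∩ (-closure (dirCone x C))

/-- `F` is a face of the convex set `K`. -/
def IsFaceOf {E : Type*} [AddCommGroup E] [Module ℝ E] (F K : Set E) : Prop :=
  F ⊆ K ∧ Convex ℝ F ∧ ∀ x ∈ K, ∀ y ∈ K, ∀ t : ℝ, 0 < t → t < 1 →
    t • x + (1 - t) • y ∈ F → x ∈ F ∧ y ∈ F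

end
/-!
The feasible directions at `x` form the convex cone generated by `K - x`. As `K` is a cone
containing `x`, the inner dual of that cone is `K* ∩ x^⊥`, so by the bipolar theorem
`cl dir(x, K)` is the inner dual of `K* ∩ x^⊥`, whose lineality space is `(K* ∩ x^⊥)^⊥`.
Finally, `K* ∩ x^⊥ = F^△`: a functional that is nonnegative on `F` and vanishes at the relative
interior point `x` vanishes on all of `F`, since `x` lies inside a segment through any point of `F`.
-/

open RealInnerProductSpace Filter Topology Pointwise

lemma eventually_add_smul_sub_mem_of_mem_intrinsicInterior {V : Type*} [NormedAddCommGroup V]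
    [NormedSpace ℝ V] {s : Set V} {x y : V} (hx : x ∈ intrinsicInterior ℝ s) (hy : y ∈ s) :
    ∀ᶠ t in 𝓝 (0 : ℝ), x + t • (x - y) ∈ s := by
  obtain ⟨p, hp, rfl⟩ := mem_intrinsicInterior.1 hx
  -- `p + t • (p - y)` is the point `lineMap y p (1 + t)` of the affine span
  have hline (t : ℝ) : (p : V) + t • ((p : V) - y) ∈ affineSpan ℝ s := by
    convert AffineMap.lineMap_mem (1 + t) (subset_affineSpan ℝ s hy) p.2 using 1
    rw [AffineMap.lineMap_apply_module]
    module
  let c : ℝ → affineSpan ℝ s := fun t ↦ ⟨_, hline t⟩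
  have hc : Continuous c := by fun_prop
  have hc0 : c 0 = p := by ext; simp [c]
  exact (hc.tendsto 0).eventually (hc0 ▸ isOpen_interior.mem_nhds hp) |>.mono
    fun _ ht ↦ interior_subset (s := ((↑) : affineSpan ℝ s → V) ⁻¹' s) ht

lemma exists_pos_add_smul_sub_mem_of_mem_intrinsicInterior {V : Type*} [NormedAddCommGroup V]
    [NormedSpace ℝ V] {s : Set V} {x y : V} (hx : x ∈ intrinsicInterior ℝ s) (hy : y ∈ s) :
    ∃ δ : ℝ, 0 < δ ∧ x + δ • (x - y) ∈ s :=
  ((eventually_add_smul_sub_mem_of_mem_intrinsicInterior hx hy).filter_mono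
    (nhdsWithin_le_nhds (s := Set.Ioi 0)) |>.and self_mem_nhdsWithin).exists.imp
    fun _ h ↦ ⟨h.2, h.1⟩

section InnerProductSpace

variable {E : Type*} [NormedAddCommGroup E] [InnerProductSpace ℝ E]

lemma dualCone_inter_perpSpan_eq_of_mem_intrinsicInterior {K F : Set E} {x : E} (hFK : F ⊆ K)
    (hxF : x ∈ intrinsicInterior ℝ F) :
    dualCone K ∩ perpSpan F = dualCone K ∩ perpSpan {x} := by
  ext z
  refine ⟨fun ⟨hzK, hzF⟩ ↦ ⟨hzK, by simpa [perpSpan] using hzF x (intrinsicInterior_subset hxF)⟩,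
    fun ⟨hzK, hzx⟩ ↦ ⟨hzK, fun f hf ↦ ?_⟩⟩
  replace hzx : ⟪x, z⟫ = 0 := by simpa [perpSpan] using hzx
  -- `x` lies strictly between `f` and a point `g` of `F`; both pair nonnegatively with `z`
  obtain ⟨δ, hδ, hg⟩ := exists_pos_add_smul_sub_mem_of_mem_intrinsicInterior hxF hf
  have hzg := hzK _ (hFK hg)
  have hzf := hzK _ (hFK hf)
  rw [inner_add_left, real_inner_smul_left, inner_sub_left, hzx] at hzg
  nlinarith

lemma dirCone_eq_hull {K : Set E} (hK : Convex ℝ K) (x : E) :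
    dirCone x K = ConvexCone.hull ℝ ((-x) +ᵥ K) := by
  ext y
  rw [SetLike.mem_coe, ConvexCone.mem_hull_of_convex (hK.vadd (-x))]
  constructor
  · rintro ⟨t, ht, hy⟩
    refine ⟨t⁻¹, inv_pos.2 ht, ?_⟩
    simpa [Set.mem_smul_set_iff_inv_smul_mem₀ (inv_pos.2 ht).ne', Set.mem_vadd_set_iff_neg_vadd_mem]
      using hy
  · rintro ⟨r, hr, hy⟩
    refine ⟨r⁻¹, inv_pos.2 hr, ?_⟩
    simpa [Set.mem_smul_set_iff_inv_smul_mem₀ hr.ne', Set.mem_vadd_set_iff_neg_vadd_mem] using hy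

variable [CompleteSpace E]

namespace ProperCone

lemma innerDual_closure (s : Set E) : innerDual (closure s) = innerDual s := by
  refine le_antisymm (innerDual_le_innerDual subset_closure) fun z hz w hw ↦ ?_
  have : IsClosed {w : E | 0 ≤ ⟪w, z⟫} := isClosed_le continuous_const (by fun_prop)
  exact this.closure_subset_iff.2 (fun _ hw' ↦ hz hw') hw

lemma closure_eq_innerDual_innerDual {C : ConvexCone ℝ E} (hC : (C : Set E).Nonempty) :
    closure (C : Set E) = innerDual (innerDual (C : Set E) : Set E) := by
  have hpointed : C.closure.Pointed :=
    .of_nonempty_of_isClosed (by simpa using hC.closure) isClosed_closure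
  let P : ProperCone ℝ E := ⟨C.closure.toPointedCone hpointed, isClosed_closure⟩
  calc closure (C : Set E) = P := rfl
    _ = innerDual (innerDual (P : Set E) : Set E) := by rw [innerDual_innerDual]
    _ = innerDual (innerDual (C : Set E) : Set E) := by
      congr 3
      exact innerDual_closure _

lemma coe_innerDual_inter_neg_eq_perpSpan (s : Set E) :
    (innerDual s : Set E) ∩ -(innerDual s : Set E) = perpSpan s := by
  ext y
  simp only [Set.mem_inter_iff, Set.mem_neg, SetLike.mem_coe, mem_innerDual, inner_neg_right,
    neg_nonneg, perpSpan, Set.mem_ofPred_eq]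
  exact ⟨fun ⟨h₁, h₂⟩ z hz ↦ le_antisymm (h₂ hz) (h₁ hz),
    fun h ↦ ⟨fun z hz ↦ (h z hz).ge, fun z hz ↦ (h z hz).le⟩⟩

end ProperCone

lemma coe_innerDual_dirCone {K : Set E} (hK : ∀ c : ℝ, 0 ≤ c → ∀ z ∈ K, c • z ∈ K) {x : E}
    (hx : x ∈ K) : (ProperCone.innerDual (dirCone x K) : Set E) = dualCone K ∩ perpSpan {x} := by
  ext z
  simp only [SetLike.mem_coe, ProperCone.mem_innerDual, Set.mem_inter_iff, perpSpan,
    Set.mem_singleton_iff, forall_eq, Set.mem_ofPred_eq]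
  constructor
  · intro hz
    have hx_dir : x ∈ dirCone x K := ⟨1, one_pos, by simpa [two_smul] using hK 2 zero_le_two x hx⟩
    have hnegx_dir : -x ∈ dirCone x K := ⟨1 / 2, one_half_pos, by
      convert hK (1 / 2) one_half_pos.le x hx using 1; module⟩
    have hxz : ⟪x, z⟫ = 0 := le_antisymm (by simpa using hz hnegx_dir) (hz hx_dir)
    refine ⟨fun k hk ↦ ?_, hxz⟩
    have hkx_dir : k - x ∈ dirCone x K := ⟨1, one_pos, by simpa using hk⟩
    simpa [inner_sub_left, hxz] using hz hkx_dir
  · rintro ⟨hzK, hxz⟩ y ⟨t, ht, hy⟩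
    have := hzK _ hy
    rw [inner_add_left, real_inner_smul_left, hxz, zero_add] at this
    exact nonneg_of_mul_nonneg_right this ht

lemma closure_dirCone_eq_innerDual_innerDual {K : Set E} (hK : Convex ℝ K) {x : E} (hx : x ∈ K) :
    closure (dirCone x K) =
      ProperCone.innerDual (ProperCone.innerDual (dirCone x K) : Set E) := by
  have hdir : (dirCone x K).Nonempty := ⟨0, 1, one_pos, by simpa using hx⟩
  rw [dirCone_eq_hull hK] at hdir ⊢
  exact ProperCone.closure_eq_innerDual_innerDual hdir

end InnerProductSpace

open RealInnerProductSpace in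
theorem stmt0_general {E : Type*} [NormedAddCommGroup E] [InnerProductSpace ℝ E]
    [FiniteDimensional ℝ E]
    (K : Set E) (hKconv : Convex ℝ K)
    (hKcone : ∀ c : ℝ, 0 ≤ c → ∀ z ∈ K, c • z ∈ K)
    (x : E) (hx : x ∈ K)
    (F : Set E) (hF : IsFaceOf F K) (hxF : x ∈ intrinsicInterior ℝ F) :
    tanSpace x K = perpSpan (dualCone K ∩ perpSpan F) := by
  rw [dualCone_inter_perpSpan_eq_of_mem_intrinsicInterior hF.1 hxF,
    ← coe_innerDual_dirCone hKcone hx, ← ProperCone.coe_innerDual_inter_neg_eq_perpSpan, tanSpace,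
    closure_dirCone_eq_innerDual_innerDual hKconv hx]

open RealInnerProductSpace in
theorem stmt0 {E : Type*} [NormedAddCommGroup E] [InnerProductSpace ℝ E]
    [FiniteDimensional ℝ E]
    (K : Set E) (hKclosed : IsClosed K) (hKconv : Convex ℝ K)
    (hKcone : ∀ c : ℝ, 0 ≤ c → ∀ z ∈ K, c • z ∈ K)
    (x : E) (hx : x ∈ K)
    (F : Set E) (hF : IsFaceOf F K) (hxF : x ∈ intrinsicInterior ℝ F) :
    tanSpace x K = perpSpan (dualCone K ∩ perpSpan F) :=
  stmt0_general K hKconv hKcone x hx F hF hxF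
end

section
/- For a face F of a closed convex cone K and any x in the relative interior of F, the two descriptions of the conjugate face coincide: K* ∩ F^⊥ = K* ∩ x^⊥. -/
/-! If `w ∈ K*` is orthogonal to `x ∈ ri F` and `z ∈ F`, then, `x` being relatively interior,
`x + t • (x - z) ∈ F ⊆ K` for some `t > 0`, so `0 ≤ ⟪x + t • (x - z), w⟫ = -t ⟪z, w⟫`; together
with `0 ≤ ⟪z, w⟫` this forces `⟪z, w⟫ = 0`. -/

open Filter Topology

theorem eventually_add_smul_mem_of_mem_intrinsicInterior {E : Type*} [AddCommGroup E]
    [Module ℝ E] [TopologicalSpace E] [IsTopologicalAddGroup E] [ContinuousSMul ℝ E]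
    {F : Set E} {x v : E} (hx : x ∈ intrinsicInterior ℝ F) (hv : v ∈ (affineSpan ℝ F).direction) :
    ∀ᶠ t in 𝓝 (0 : ℝ), x + t • v ∈ F := by
  obtain ⟨y, hy, rfl⟩ := mem_intrinsicInterior.1 hx
  let c : ℝ → affineSpan ℝ F := fun t =>
    ⟨y + t • v, by
      rw [add_comm]
      exact AffineSubspace.vadd_mem_of_mem_direction ((affineSpan ℝ F).direction.smul_mem t hv) y.2⟩
  have hc : Continuous c := by fun_prop
  have hc0 : c 0 = y := by simp [c]
  have h : ∀ᶠ t in 𝓝 (0 : ℝ), c t ∈ interior ((↑) ⁻¹' F) :=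
    hc.continuousAt.preimage_mem_nhds (hc0 ▸ isOpen_interior.mem_nhds hy)
  exact h.mono fun t ht => (interior_subset ht : c t ∈ (↑) ⁻¹' F)

theorem LinearMap.eqOn_zero_of_nonneg_of_mem_intrinsicInterior {E : Type*} [AddCommGroup E]
    [Module ℝ E] [TopologicalSpace E] [IsTopologicalAddGroup E] [ContinuousSMul ℝ E]
    (f : E →ₗ[ℝ] ℝ) {F : Set E} (hf : ∀ z ∈ F, 0 ≤ f z) {x : E}
    (hx : x ∈ intrinsicInterior ℝ F) (hfx : f x = 0) : Set.EqOn f 0 F := by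
  intro z hz
  show f z = 0
  have hdir : x - z ∈ (affineSpan ℝ F).direction :=
    AffineSubspace.vsub_mem_direction (subset_affineSpan ℝ F (intrinsicInterior_subset hx))
      (subset_affineSpan ℝ F hz)
  obtain ⟨t, htF, ht⟩ := ((eventually_add_smul_mem_of_mem_intrinsicInterior hx hdir).filter_mono
    nhdsWithin_le_nhds |>.and self_mem_nhdsWithin : ∀ᶠ t in 𝓝[>] (0 : ℝ), _ ∧ 0 < t).exists
  have hnonneg : 0 ≤ f (x + t • (x - z)) := hf _ htF
  rw [map_add, map_smul, map_sub, hfx, smul_eq_mul] at hnonneg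
  nlinarith [hf z hz]

theorem stmt1_general {E : Type*} [NormedAddCommGroup E] [InnerProductSpace ℝ E]
    (K : Set E)
    (F : Set E) (hF : IsFaceOf F K)
    (x : E) (hx : x ∈ intrinsicInterior ℝ F) :
    dualCone K ∩ perpSpan F = dualCone K ∩ {z | (inner ℝ x z : ℝ) = 0} := by
  ext w
  refine ⟨fun ⟨hw, hwF⟩ => ⟨hw, hwF x (intrinsicInterior_subset hx)⟩, fun ⟨hw, hxw⟩ => ⟨hw, ?_⟩⟩
  exact fun z hz => (innerₗ E).flip w |>.eqOn_zero_of_nonneg_of_mem_intrinsicInterior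
    (fun z hz => hw z (hF.1 hz)) hx hxw hz

theorem stmt1 {E : Type*} [NormedAddCommGroup E] [InnerProductSpace ℝ E]
    [FiniteDimensional ℝ E]
    (K : Set E) (hKclosed : IsClosed K) (hKconv : Convex ℝ K)
    (hKcone : ∀ c : ℝ, 0 ≤ c → ∀ z ∈ K, c • z ∈ K)
    (F : Set E) (hF : IsFaceOf F K)
    (x : E) (hx : x ∈ intrinsicInterior ℝ F) :
    dualCone K ∩ perpSpan F = dualCone K ∩ {z | (inner ℝ x z : ℝ) = 0} :=
  stmt1_general K F hF x hx
end

section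
/- Let x be the n×n positive semidefinite matrix with identity block I_r in the top-left corner and zeros elsewhere. Then the tangent space of the PSD cone at x is the set of symmetric matrices whose bottom-right (n−r)×(n−r) block is zero. -/
/-!
Write `P = 1 - x` for the projection onto the kernel of the orthogonal projection `x`.
If `x + t y ⪰ 0` with `t > 0`, then `t • P y P = P (x + t y) P ⪰ 0`; this closed condition passes to
the closure of the direction cone, so `y` and `-y` in that closure force `P y P = 0`.
Conversely, if `P v P = 0` then `v = Q x + x Qᵀ` with `Q = v - x v / 2`, and
`x + t (Q x + x Qᵀ + t Q Qᵀ) = (x + t Q)(x + t Q)ᵀ ⪰ 0`, so letting `t → 0⁺` puts `v` (and likewise `-v`)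
in the closure of the direction cone.
-/

open Filter Topology

namespace Matrix

theorem isClosed_setOf_isHermitian {ι : Type*} : IsClosed {A : Matrix ι ι ℝ | A.IsHermitian} :=
  isClosed_eq continuous_id.matrix_conjTranspose continuous_id

theorem eq_zero_of_posSemidef_of_posSemidef_neg {ι : Type*} {A : Matrix ι ι ℝ}
    (hA : A.PosSemidef) (hnA : (-A).PosSemidef) : A = 0 := by
  open scoped MatrixOrder in
  exact le_antisymm (by rwa [le_iff, zero_sub]) hA.nonneg

theorem diagonal_mul_mul_diagonal_eq_zero_iff {ι R : Type*} [Fintype ι] [DecidableEq ι]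
    [Semiring R] [NoZeroDivisors R] (d : ι → R) (v : Matrix ι ι R) :
    diagonal d * v * diagonal d = 0 ↔ ∀ i j, d i ≠ 0 → d j ≠ 0 → v i j = 0 := by
  simp only [← Matrix.ext_iff, mul_diagonal, diagonal_mul, zero_apply, mul_eq_zero]
  exact forall₂_congr fun i j => by tauto

theorem isClosed_setOf_posSemidef {ι : Type*} [Fintype ι] :
    IsClosed {A : Matrix ι ι ℝ | A.PosSemidef} := by
  simp only [posSemidef_iff_dotProduct_mulVec, Set.ofPred_and, Set.ofPred_forall]
  exact isClosed_setOf_isHermitian.inter <| isClosed_iInter fun u =>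
    isClosed_le continuous_const
      (continuous_const.dotProduct (continuous_id.matrix_mulVec continuous_const))

variable {ι : Type*} [Fintype ι] [DecidableEq ι]

theorem dirCone_posSemidef_subset {x P : Matrix ι ι ℝ} (hx : x.IsHermitian)
    (hP : Pᴴ * x * P = 0) :
    dirCone x {A | A.PosSemidef} ⊆ {y | y.IsHermitian ∧ (Pᴴ * y * P).PosSemidef} := by
  rintro y ⟨t, ht, hxy⟩
  have hy : y = t⁻¹ • ((x + t • y) - x) := by
    rw [add_sub_cancel_left, smul_smul, inv_mul_cancel₀ ht.ne', one_smul]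
  refine ⟨hy ▸ (hxy.isHermitian.sub hx).smul (IsSelfAdjoint.all _), ?_⟩
  have hcompress := (hxy.conjTranspose_mul_mul_same P).smul (inv_nonneg.mpr ht.le)
  rwa [mul_add, add_mul, hP, zero_add, mul_smul_comm, smul_mul_assoc, smul_smul,
    inv_mul_cancel₀ ht.ne', one_smul] at hcompress

theorem tanSpace_posSemidef_subset {x P : Matrix ι ι ℝ} (hx : x.IsHermitian)
    (hP : Pᴴ * x * P = 0) :
    tanSpace x {A | A.PosSemidef} ⊆ {y | y.IsHermitian ∧ Pᴴ * y * P = 0} := by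
  have hclosed : IsClosed {y : Matrix ι ι ℝ | y.IsHermitian ∧ (Pᴴ * y * P).PosSemidef} :=
    isClosed_setOf_isHermitian.inter <| isClosed_setOf_posSemidef.preimage <|
      (continuous_const.mul continuous_id).mul continuous_const
  rintro y ⟨hy, hny⟩
  obtain ⟨hyh, hyP⟩ := closure_minimal (dirCone_posSemidef_subset hx hP) hclosed hy
  obtain ⟨-, hnyP⟩ := closure_minimal (dirCone_posSemidef_subset hx hP) hclosed hny
  refine ⟨hyh, eq_zero_of_posSemidef_of_posSemidef_neg hyP ?_⟩
  rwa [Matrix.mul_neg, Matrix.neg_mul] at hnyP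

theorem mul_conjTranspose_add_mem_closure_dirCone_posSemidef {x : Matrix ι ι ℝ}
    (hx : x * xᴴ = x) (Q : Matrix ι ι ℝ) :
    Q * xᴴ + x * Qᴴ ∈ closure (dirCone x {A | A.PosSemidef}) := by
  have hlim : Tendsto (fun t : ℝ => Q * xᴴ + x * Qᴴ + t • (Q * Qᴴ)) (𝓝[>] 0)
      (𝓝 (Q * xᴴ + x * Qᴴ)) := by
    have : Continuous fun t : ℝ => Q * xᴴ + x * Qᴴ + t • (Q * Qᴴ) := by fun_prop
    simpa using (this.tendsto 0).mono_left nhdsWithin_le_nhds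
  refine mem_closure_of_tendsto hlim (eventually_nhdsWithin_of_forall fun t (ht : 0 < t) => ?_)
  have hsq : x + t • (Q * xᴴ + x * Qᴴ + t • (Q * Qᴴ)) = (x + t • Q) * (x + t • Q)ᴴ := by
    rw [conjTranspose_add, conjTranspose_smul, star_trivial]
    simp only [Matrix.add_mul, Matrix.mul_add, smul_add, smul_mul_assoc, mul_smul_comm, smul_smul,
      hx]
    abel
  refine ⟨t, ht, ?_⟩
  rw [Set.mem_ofPred_eq, hsq]
  exact posSemidef_self_mul_conjTranspose _

theorem exists_eq_mul_conjTranspose_add {x v : Matrix ι ι ℝ} (hx : x.IsHermitian)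
    (hv : v.IsHermitian) (h : (1 - x) * v * (1 - x) = 0) : ∃ Q, v = Q * xᴴ + x * Qᴴ := by
  refine ⟨v - (2⁻¹ : ℝ) • (x * v), ?_⟩
  calc v = v - (1 - x) * v * (1 - x) := by rw [h, sub_zero]
    _ = (v - (2⁻¹ : ℝ) • (x * v)) * x + x * (v - (2⁻¹ : ℝ) • (v * x)) := by
      simp only [sub_mul, mul_sub, smul_mul_assoc, mul_smul_comm, Matrix.one_mul, Matrix.mul_one,
        Matrix.mul_assoc]
      module
    _ = _ := by
      rw [conjTranspose_sub, conjTranspose_smul, conjTranspose_mul, hx.eq, hv.eq, star_trivial]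

theorem tanSpace_posSemidef_of_isIdempotentElem {x : Matrix ι ι ℝ} (hx : x.IsHermitian)
    (hxx : IsIdempotentElem x) :
    tanSpace x {A | A.PosSemidef} = {v | v.IsHermitian ∧ (1 - x) * v * (1 - x) = 0} := by
  have hcompress : (1 - x)ᴴ * x * (1 - x) = 0 := by
    rw [conjTranspose_sub, conjTranspose_one, hx.eq, sub_mul, hxx.eq, Matrix.one_mul, sub_self,
      Matrix.zero_mul]
  have hclosure (v : Matrix ι ι ℝ) (hv : v.IsHermitian) (h : (1 - x) * v * (1 - x) = 0) :
      v ∈ closure (dirCone x {A | A.PosSemidef}) := by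
    obtain ⟨Q, rfl⟩ := exists_eq_mul_conjTranspose_add hx hv h
    exact mul_conjTranspose_add_mem_closure_dirCone_posSemidef (by rw [hx.eq, hxx.eq]) Q
  refine subset_antisymm (fun y hy => ?_) ?_
  · obtain ⟨hyh, hyP⟩ := tanSpace_posSemidef_subset hx hcompress hy
    rw [conjTranspose_sub, conjTranspose_one, hx.eq] at hyP
    exact ⟨hyh, hyP⟩
  · rintro v ⟨hv, h⟩
    refine ⟨hclosure v hv h, hclosure (-v) hv.neg ?_⟩
    rw [Matrix.mul_neg, Matrix.neg_mul, h, neg_zero]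

theorem tanSpace_posSemidef_diagonal_ite (p : ι → Prop) [DecidablePred p] :
    tanSpace (diagonal fun i => if p i then (1 : ℝ) else 0) {A | A.PosSemidef} =
      {v | v.IsSymm ∧ ∀ i j, ¬p i → ¬p j → v i j = 0} := by
  have hxx : IsIdempotentElem (diagonal fun i => if p i then (1 : ℝ) else 0) := by
    rw [IsIdempotentElem, diagonal_mul_diagonal]
    congr! 2 with i
    split_ifs <;> norm_num
  rw [tanSpace_posSemidef_of_isIdempotentElem (isHermitian_diagonal _) hxx,
    ← diagonal_one, diagonal_sub]
  ext v
  have hcompl (i : ι) : (1 - if p i then (1 : ℝ) else 0) ≠ 0 ↔ ¬p i := by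
    split_ifs <;> simp [*]
  simp only [Set.mem_ofPred_eq, isHermitian_iff_isSymm, diagonal_mul_mul_diagonal_eq_zero_iff,
    hcompl]

end Matrix

open Matrix in
theorem stmt2_general (n r : ℕ)
    (x : Matrix (Fin n) (Fin n) ℝ)
    (hx : x = Matrix.of fun i j : Fin n => if i = j ∧ (i : ℕ) < r then (1 : ℝ) else 0) :
    tanSpace x {m : Matrix (Fin n) (Fin n) ℝ | m.PosSemidef} =
      {v : Matrix (Fin n) (Fin n) ℝ |
        v.IsSymm ∧ ∀ i j : Fin n, r ≤ (i : ℕ) → r ≤ (j : ℕ) → v i j = 0} := by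
  have hdiag : x = diagonal fun i : Fin n => if (i : ℕ) < r then (1 : ℝ) else 0 := by
    ext i j
    rw [hx, of_apply, diagonal_apply, ite_and]
  simp only [hdiag, tanSpace_posSemidef_diagonal_ite, not_lt]

open Matrix in
theorem stmt2 (n r : ℕ) (hr : r ≤ n)
    (x : Matrix (Fin n) (Fin n) ℝ)
    (hx : x = Matrix.of fun i j : Fin n => if i = j ∧ (i : ℕ) < r then (1 : ℝ) else 0) :
    tanSpace x {m : Matrix (Fin n) (Fin n) ℝ | m.PosSemidef} =
      {v : Matrix (Fin n) (Fin n) ℝ |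
        v.IsSymm ∧ ∀ i j : Fin n, r ≤ (i : ℕ) → r ≤ (j : ℕ) → v i j = 0} :=
  stmt2_general n r x hx
end

section
/- For an arbitrary positive semidefinite n×n matrix x, the tangent space of the PSD cone at x equals the set of matrices of the form w + wᵀ such that for some real β the block matrix [[x, w],[wᵀ, βI]] is positive semidefinite. -/
/-!
If `x + t • y ⪰ 0` with `t > 0`, then `y` is symmetric and `Qᴴ y Q ⪰ 0` for every `Q` with
`x * Q = 0`; both conditions are closed, so they hold on `cl(dir(x, S₊))`. For a tangent direction
they hold for `y` and `-y`, whence `Qᴴ y Q = 0` for `Q = 1 - P`, `P = x x⁺` the projection onto the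
range of `x`. Then `y = w + wᵀ` with `w = P (y - ½ y P) = x M`, and
`[[x, x M], [Mᵀ x, β • 1]] = [1 M]ᵀ x [1 M] + diag(0, β • 1 - Mᵀ x M)` is positive semidefinite once
`β • 1 ⪰ Mᵀ x M`.

Conversely, conjugating the block matrix by `[1; t • 1]` gives
`x + t (w + wᵀ) + t² β ⪰ 0` for every real `t`, so `±(w + wᵀ) + ε` is a feasible direction for
every `ε > 0` (take `t β ≤ ε`), and `±(w + wᵀ)` lies in the closure.
-/

open Filter Topology

theorem mem_closure_of_forall_add_smul_mem {E : Type*} [AddCommGroup E] [Module ℝ E]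
    [TopologicalSpace E] [ContinuousAdd E] [ContinuousSMul ℝ E] {S : Set E} {y e : E}
    (h : ∀ ε : ℝ, 0 < ε → y + ε • e ∈ S) : y ∈ closure S := by
  have hlim : Tendsto (fun ε : ℝ => y + ε • e) (𝓝[>] 0) (𝓝 y) := by
    have hcont : Continuous fun ε : ℝ => y + ε • e := by fun_prop
    simpa using (hcont.tendsto 0).mono_left nhdsWithin_le_nhds
  exact mem_closure_of_tendsto hlim (eventually_nhdsWithin_of_forall h)

namespace Matrix

theorem isClosed_setOf_isHermitian_s3 {n R : Type*} [TopologicalSpace R] [Star R] [ContinuousStar R]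
    [T2Space R] : IsClosed {m : Matrix n n R | m.IsHermitian} :=
  isClosed_eq continuous_id.matrix_conjTranspose continuous_id

section DirectionCone

variable {n : Type*}

theorem isClosed_setOf_posSemidef_s3 [Fintype n] : IsClosed {m : Matrix n n ℝ | m.PosSemidef} := by
  simp only [posSemidef_iff_dotProduct_mulVec, Set.ofPred_and, Set.ofPred_forall]
  exact isClosed_setOf_isHermitian_s3.inter
    (isClosed_iInter fun v => isClosed_le continuous_const (by fun_prop))

theorem dirCone_posSemidef_subset_s3 [Fintype n] {x Q : Matrix n n ℝ} (hx : x.PosSemidef)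
    (hQ : x * Q = 0) :
    dirCone x {m | m.PosSemidef} ⊆ {m | m.IsHermitian ∧ (Qᴴ * m * Q).PosSemidef} := by
  rintro m ⟨t, ht, hm⟩
  refine ⟨?_, ?_⟩
  · have hsub : t • m = (x + t • m) - x := (add_sub_cancel_left _ _).symm
    rw [← inv_smul_smul₀ ht.ne' m, hsub]
    exact (hm.1.sub hx.1).smul (.all _)
  · have hconj : Qᴴ * (x + t • m) * Q = t • (Qᴴ * m * Q) := by
      rw [Matrix.mul_add, Matrix.add_mul, Matrix.mul_assoc Qᴴ x, hQ]
      simp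
    rw [← inv_smul_smul₀ ht.ne' (Qᴴ * m * Q), ← hconj]
    exact (hm.conjTranspose_mul_mul_same Q).smul (inv_nonneg.2 ht.le)

theorem closure_dirCone_posSemidef_subset [Fintype n] {x Q : Matrix n n ℝ} (hx : x.PosSemidef)
    (hQ : x * Q = 0) :
    closure (dirCone x {m | m.PosSemidef}) ⊆ {m | m.IsHermitian ∧ (Qᴴ * m * Q).PosSemidef} :=
  closure_minimal (dirCone_posSemidef_subset_s3 hx hQ)
    (isClosed_setOf_isHermitian_s3.inter (isClosed_setOf_posSemidef_s3.preimage (by fun_prop)))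

open scoped MatrixOrder in
theorem isHermitian_and_mul_mul_eq_zero_of_mem_tanSpace [Fintype n] {x Q y : Matrix n n ℝ}
    (hx : x.PosSemidef) (hQ : x * Q = 0) (hy : y ∈ tanSpace x {m | m.PosSemidef}) :
    y.IsHermitian ∧ Qᴴ * y * Q = 0 := by
  have hsub := closure_dirCone_posSemidef_subset hx hQ
  obtain ⟨hyH, hyQ⟩ := hsub hy.1
  obtain ⟨-, hyQ'⟩ := hsub hy.2
  refine ⟨hyH, le_antisymm ?_ (nonneg_iff_posSemidef.2 hyQ)⟩
  rw [le_iff, zero_sub]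
  simpa using hyQ'

theorem mem_closure_dirCone_posSemidef [DecidableEq n] {x y : Matrix n n ℝ} {β : ℝ}
    (h : ∀ t : ℝ, 0 < t → (x + t • y + (t ^ 2 * β) • (1 : Matrix n n ℝ)).PosSemidef) :
    y ∈ closure (dirCone x {m | m.PosSemidef}) := by
  refine mem_closure_of_forall_add_smul_mem (e := 1) fun ε hε => ?_
  set t := ε / (|β| + 1)
  have ht : 0 < t := by positivity
  have htβ : t * β ≤ ε := by
    calc t * β ≤ t * (|β| + 1) := by gcongr; linarith [le_abs_self β]
      _ = ε := div_mul_cancel₀ _ (by positivity)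
  refine ⟨t, ht, ?_⟩
  have hsplit : x + t • (y + ε • 1) = (x + t • y + (t ^ 2 * β) • 1) + (t * (ε - t * β)) • 1 := by
    module
  rw [Set.mem_ofPred_eq, hsplit]
  exact (h t ht).add (PosSemidef.one.smul (by nlinarith))

end DirectionCone

section Pseudoinverse

variable {n : Type*} [Fintype n] [DecidableEq n]

/-- For Hermitian `x` this is the Moore–Penrose pseudoinverse: the eigenvalue `0` is sent to
`0⁻¹ = 0`. -/
noncomputable def pinv (x : Matrix n n ℝ) : Matrix n n ℝ := cfc (·⁻¹ : ℝ → ℝ) x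

theorem mul_pinv_eq_cfc {x : Matrix n n ℝ} (hx : x.IsHermitian) :
    x * pinv x = cfc (fun t : ℝ => t * t⁻¹) x := by
  have hfin := x.finite_real_spectrum
  nth_rewrite 1 [← cfc_id' ℝ x hx.isSelfAdjoint]
  rw [pinv, ← cfc_mul _ _ x (hfin.continuousOn _) (hfin.continuousOn _)]

theorem isHermitian_mul_pinv {x : Matrix n n ℝ} (hx : x.IsHermitian) :
    (x * pinv x).IsHermitian := by
  rw [mul_pinv_eq_cfc hx]
  exact IsSelfAdjoint.cfc

theorem mul_mul_pinv {x : Matrix n n ℝ} (hx : x.IsHermitian) : x * (x * pinv x) = x := by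
  have hfin := x.finite_real_spectrum
  rw [mul_pinv_eq_cfc hx]
  nth_rewrite 1 [← cfc_id' ℝ x hx.isSelfAdjoint]
  rw [← cfc_mul _ _ x (hfin.continuousOn _) (hfin.continuousOn _)]
  conv_rhs => rw [← cfc_id' ℝ x hx.isSelfAdjoint]
  exact cfc_congr fun t _ => by rw [← mul_assoc, mul_self_mul_inv]

end Pseudoinverse

section BlockMatrix

variable {n : Type*} [Fintype n] [DecidableEq n]

theorem eq_add_transpose_of_mul_mul_eq_zero {P y : Matrix n n ℝ} (hP : P.IsHermitian)
    (hy : y.IsHermitian) (h : (1 - P)ᴴ * y * (1 - P) = 0) :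
    y = P * (y - (2⁻¹ : ℝ) • (y * P)) + (P * (y - (2⁻¹ : ℝ) • (y * P)))ᵀ := by
  have hPt : Pᵀ = P := by rw [← conjTranspose_eq_transpose_of_trivial]; exact hP
  have hyt : yᵀ = y := by rw [← conjTranspose_eq_transpose_of_trivial]; exact hy
  rw [conjTranspose_sub, conjTranspose_one, hP.eq] at h
  have hexp : (1 - P) * y * (1 - P) = y - P * y - y * P + P * y * P := by noncomm_ring
  rw [transpose_mul, transpose_sub, transpose_smul, transpose_mul, hPt, hyt]
  calc y = y - (1 - P) * y * (1 - P) := by rw [h, sub_zero]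
    _ = _ := by
      rw [hexp, Matrix.mul_sub, Matrix.sub_mul, mul_smul_comm, smul_mul_assoc, ← Matrix.mul_assoc]
      module

open scoped MatrixOrder in
theorem IsHermitian.exists_posSemidef_smul_one_sub {A : Matrix n n ℝ} (hA : A.IsHermitian) :
    ∃ β : ℝ, (β • 1 - A).PosSemidef := by
  obtain ⟨β, hβ⟩ := A.finite_real_spectrum.bddAbove
  refine ⟨β, ?_⟩
  have hle := le_algebraMap_of_spectrum_le (fun t ht => hβ ht) hA.isSelfAdjoint
  rwa [le_iff, Algebra.algebraMap_eq_smul_one] at hle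

theorem PosSemidef.exists_posSemidef_fromBlocks_mul {x : Matrix n n ℝ} (hx : x.PosSemidef)
    (M : Matrix n n ℝ) : ∃ β : ℝ, (fromBlocks x (x * M) (x * M)ᵀ (β • 1)).PosSemidef := by
  obtain ⟨β, hβ⟩ := (hx.conjTranspose_mul_mul_same M).1.exists_posSemidef_smul_one_sub
  refine ⟨β, ?_⟩
  have hxt : xᵀ = x := by rw [← conjTranspose_eq_transpose_of_trivial]; exact hx.1
  have hsplit : fromBlocks x (x * M) (x * M)ᵀ (β • 1)
      = (fromCols (1 : Matrix n n ℝ) M)ᴴ * x * fromCols (1 : Matrix n n ℝ) M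
        + (fromCols (0 : Matrix n n ℝ) 1)ᴴ * (β • 1 - Mᴴ * x * M)
          * fromCols (0 : Matrix n n ℝ) 1 := by
    simp only [conjTranspose_fromCols_eq_fromRows_conjTranspose, fromRows_mul, mul_fromCols]
    ext (i | i) (j | j) <;> simp [hxt, transpose_mul, conjTranspose_eq_transpose_of_trivial]
  rw [hsplit]
  exact (hx.conjTranspose_mul_mul_same _).add (hβ.conjTranspose_mul_mul_same _)

theorem PosSemidef.add_smul_add_transpose_add_smul_one {x w : Matrix n n ℝ} {β : ℝ}
    (h : (fromBlocks x w wᵀ (β • 1)).PosSemidef) (t : ℝ) :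
    (x + t • (w + wᵀ) + (t ^ 2 * β) • 1).PosSemidef := by
  have hconj : x + t • (w + wᵀ) + (t ^ 2 * β) • 1
      = (fromRows (1 : Matrix n n ℝ) (t • 1 : Matrix n n ℝ)).conjTranspose
        * fromBlocks x w wᵀ (β • 1) * fromRows (1 : Matrix n n ℝ) (t • 1 : Matrix n n ℝ) := by
    rw [conjTranspose_fromRows_eq_fromCols_conjTranspose, fromCols_mul_fromBlocks,
      fromCols_mul_fromRows]
    simp only [conjTranspose_eq_transpose_of_trivial, transpose_one, transpose_smul, one_mul,
      mul_one, Algebra.smul_mul_assoc, Algebra.mul_smul_comm]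
    module
  rw [hconj]
  exact h.conjTranspose_mul_mul_same _

end BlockMatrix

end Matrix

open Matrix in
theorem stmt3 (n : ℕ) (x : Matrix (Fin n) (Fin n) ℝ) (hx : x.PosSemidef) :
    tanSpace x {m : Matrix (Fin n) (Fin n) ℝ | m.PosSemidef} =
      {y : Matrix (Fin n) (Fin n) ℝ | ∃ (w : Matrix (Fin n) (Fin n) ℝ) (β : ℝ),
        y = w + wᵀ ∧
        (Matrix.fromBlocks x w wᵀ (β • (1 : Matrix (Fin n) (Fin n) ℝ))).PosSemidef} := by
  ext y
  constructor
  · intro hy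
    set P := x * pinv x
    have hxQ : x * (1 - P) = 0 := by
      rw [Matrix.mul_sub, Matrix.mul_one, mul_mul_pinv hx.1, sub_self]
    obtain ⟨hyH, hyQ⟩ := isHermitian_and_mul_mul_eq_zero_of_mem_tanSpace hx hxQ hy
    set M := pinv x * (y - (2⁻¹ : ℝ) • (y * P))
    obtain ⟨β, hβ⟩ := hx.exists_posSemidef_fromBlocks_mul M
    refine ⟨x * M, β, ?_, hβ⟩
    rw [← Matrix.mul_assoc]
    exact eq_add_transpose_of_mul_mul_eq_zero (isHermitian_mul_pinv hx.1) hyH hyQ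
  · rintro ⟨w, β, rfl, hb⟩
    have hquad := hb.add_smul_add_transpose_add_smul_one
    refine ⟨mem_closure_dirCone_posSemidef fun t _ => hquad t, ?_⟩
    refine mem_closure_dirCone_posSemidef (β := β) fun t _ => ?_
    simpa only [neg_sq, neg_smul, smul_neg] using hquad (-t)
end

section
/- Let K be a closed convex cone, A : X → Y a linear map, b ∈ Y, and suppose the system Ax ≤_K b is feasible. Let F_min be the minimal cone, i.e., the face of K containing b − A x̄ in its relative interior for x̄ in the relative interior of the feasible set. Then for every feasible x, the slack b − Ax lies in F_min; consequently, the feasible sets of Ax ≤_K b and Ax ≤_{F_min} b coincide. -/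
/-!
Any feasible `x` can be reflected through the relative interior point `x̄` a little:
`x̄ + ε (x̄ - x)` is still feasible for small `ε > 0`. Since the slack map is affine, the slack
at `x̄`, which lies in `F_min`, is then a proper convex combination of two slacks in `K`, and the
face property of `F_min` forces the slack at `x` into `F_min`.
-/

open Filter Topology

theorem exists_pos_add_smul_sub_mem_of_mem_intrinsicInterior_s4
    {V : Type*} [AddCommGroup V] [Module ℝ V] [TopologicalSpace V] [IsTopologicalAddGroup V]
    [ContinuousSMul ℝ V] {C : Set V} {p x : V} (hp : p ∈ intrinsicInterior ℝ C) (hx : x ∈ C) :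
    ∃ ε : ℝ, 0 < ε ∧ p + ε • (p - x) ∈ C := by
  obtain ⟨q, hq, rfl⟩ := mem_intrinsicInterior.1 hp
  set D : Set (affineSpan ℝ C) := (↑) ⁻¹' C
  have hline (t : ℝ) : (q : V) + t • ((q : V) - x) ∈ affineSpan ℝ C := by
    simpa [vsub_eq_sub, vadd_eq_add, add_comm] using
      AffineSubspace.smul_vsub_vadd_mem _ t q.2 (mem_affineSpan ℝ hx) q.2
  let g : ℝ → affineSpan ℝ C := fun t => ⟨_, hline t⟩
  have hg : Continuous g := by fun_prop
  have hg0 : g 0 = q := Subtype.ext (by simp [g])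
  have hnear : ∀ᶠ t in 𝓝 0, g t ∈ interior D :=
    hg.continuousAt.eventually (hg0 ▸ isOpen_interior.mem_nhds hq)
  obtain ⟨ε, hεD, hε⟩ :=
    ((hnear.filter_mono (nhdsWithin_le_nhds (s := Set.Ioi 0))).and self_mem_nhdsWithin).exists
  exact ⟨ε, hε, interior_subset (s := D) hεD⟩

theorem IsFaceOf.mem_of_add_smul_sub_mem {E : Type*} [AddCommGroup E] [Module ℝ E]
    {F K : Set E} (hF : IsFaceOf F K) {p x : E} {ε : ℝ} (hε : 0 < ε) (hp : p ∈ F)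
    (hx : x ∈ K) (hpx : p + ε • (p - x) ∈ K) : x ∈ F := by
  have hε₁ : (0 : ℝ) < 1 + ε := by linarith
  have hcomb : (1 + ε)⁻¹ • (p + ε • (p - x)) + (1 - (1 + ε)⁻¹) • x = p := by
    match_scalars
    · field_simp
    · field_simp
      ring
  refine (hF.2.2 _ hpx _ hx _ (inv_pos.2 hε₁) (inv_lt_one_of_one_lt₀ (by linarith)) ?_).2
  rwa [hcomb]

theorem stmt4_general
    {X Y : Type*} [NormedAddCommGroup X] [InnerProductSpace ℝ X]
    [NormedAddCommGroup Y] [InnerProductSpace ℝ Y]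
    (K : Set Y)
    (A : X →ₗ[ℝ] Y) (b : Y)
    (xbar : X) (hxbar : xbar ∈ intrinsicInterior ℝ {x : X | b - A x ∈ K})
    (Fmin : Set Y) (hFminFace : IsFaceOf Fmin K)
    (hFmin : b - A xbar ∈ intrinsicInterior ℝ Fmin) :
    (∀ x : X, b - A x ∈ K → b - A x ∈ Fmin) ∧
    {x : X | b - A x ∈ K} = {x : X | b - A x ∈ Fmin} := by
  have hslack : ∀ x : X, b - A x ∈ K → b - A x ∈ Fmin := by
    intro x hx
    obtain ⟨ε, hε, hfeas⟩ := exists_pos_add_smul_sub_mem_of_mem_intrinsicInterior_s4 hxbar hx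
    have haffine : b - A (xbar + ε • (xbar - x)) =
        (b - A xbar) + ε • ((b - A xbar) - (b - A x)) := by
      simp only [map_add, map_smul, map_sub]
      module
    exact hFminFace.mem_of_add_smul_sub_mem hε (intrinsicInterior_subset hFmin) hx
      (haffine ▸ hfeas)
  exact ⟨hslack, Set.Subset.antisymm hslack fun x hx => hFminFace.1 hx⟩

theorem stmt4
    {X Y : Type*} [NormedAddCommGroup X] [InnerProductSpace ℝ X] [FiniteDimensional ℝ X]
    [NormedAddCommGroup Y] [InnerProductSpace ℝ Y] [FiniteDimensional ℝ Y]
    (K : Set Y) (hKclosed : IsClosed K) (hKconv : Convex ℝ K)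
    (hKcone : ∀ c : ℝ, 0 ≤ c → ∀ z ∈ K, c • z ∈ K)
    (A : X →ₗ[ℝ] Y) (b : Y)
    (xbar : X) (hxbar : xbar ∈ intrinsicInterior ℝ {x : X | b - A x ∈ K})
    (Fmin : Set Y) (hFminFace : IsFaceOf Fmin K)
    (hFmin : b - A xbar ∈ intrinsicInterior ℝ Fmin) :
    (∀ x : X, b - A x ∈ K → b - A x ∈ Fmin) ∧
    {x : X | b - A x ∈ K} = {x : X | b - A x ∈ Fmin} :=
  stmt4_general K A b xbar hxbar Fmin hFminFace hFmin
end

section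
/- Suppose F is a face of K with F_min ⊆ F. Then for every y ∈ F* with A*y = 0 and ⟨b, y⟩ = 0 (equivalently y ∈ F* ∩ N((A,b)*)), we have F_min ⊆ F ∩ y^⊥ ⊆ F. -/
/-!
Since `b - A x̄ ∈ ri F_min` and `y ⊥ range A, b`, the functional `⟨·, y⟩` vanishes at a relative
interior point of `F_min` and is nonnegative on `F_min ⊆ F`. From a relative interior point one can
step slightly beyond it away from any point of `F_min` and stay in `F_min`; nonnegativity there
forces the functional to vanish on all of `F_min`.
-/

open Filter Topology

theorem exists_pos_add_smul_sub_mem_of_mem_intrinsicInterior_s6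
    {E : Type*} [SeminormedAddCommGroup E] [NormedSpace ℝ E] {s : Set E} {w z : E}
    (hw : w ∈ intrinsicInterior ℝ s) (hz : z ∈ affineSpan ℝ s) :
    ∃ t : ℝ, 0 < t ∧ w + t • (w - z) ∈ s := by
  obtain ⟨w', hw'int, rfl⟩ := mem_intrinsicInterior.mp hw
  let γ : ℝ → affineSpan ℝ s := fun t =>
    ⟨w' + t • ((w' : E) - z), by
      simpa [vsub_eq_sub, vadd_eq_add, add_comm] using
        AffineSubspace.smul_vsub_vadd_mem _ t w'.2 hz w'.2⟩
  have hγ : Continuous γ := by fun_prop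
  have hγ0 : γ 0 = w' := by ext; simp [γ]
  have hnhds : ∀ᶠ t in 𝓝 (0 : ℝ), γ t ∈ interior ((↑) ⁻¹' s) :=
    hγ.continuousAt.preimage_mem_nhds (hγ0 ▸ isOpen_interior.mem_nhds hw'int)
  obtain ⟨t, ht, htpos⟩ := ((hnhds.filter_mono (nhdsWithin_le_nhds (s := Set.Ioi 0))).and
    self_mem_nhdsWithin).exists
  exact ⟨t, htpos, (interior_subset ht : γ t ∈ _)⟩

theorem LinearMap.eqOn_zero_of_nonneg_of_mem_intrinsicInterior_s6
    {E : Type*} [SeminormedAddCommGroup E] [NormedSpace ℝ E] {s : Set E} {w : E}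
    (f : E →ₗ[ℝ] ℝ) (hf : ∀ z ∈ s, 0 ≤ f z) (hw : w ∈ intrinsicInterior ℝ s) (hfw : f w = 0) :
    Set.EqOn f 0 s := by
  intro z hz
  obtain ⟨t, htpos, hts⟩ :=
    exists_pos_add_smul_sub_mem_of_mem_intrinsicInterior_s6 hw (subset_affineSpan ℝ s hz)
  have hstep : f (w + t • (w - z)) = -t * f z := by simp [hfw]
  have hfz : f z ≤ 0 := by nlinarith [hf _ hts]
  exact le_antisymm hfz (hf z hz)

theorem stmt6_general
    {X Y : Type*} [NormedAddCommGroup X] [InnerProductSpace ℝ X]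
    [NormedAddCommGroup Y] [InnerProductSpace ℝ Y]
    (A : X →ₗ[ℝ] Y) (b : Y)
    (xbar : X)
    (Fmin : Set Y)
    (hFmin : b - A xbar ∈ intrinsicInterior ℝ Fmin)
    (F : Set Y) (hFminF : Fmin ⊆ F)
    (y : Y) (hy : y ∈ dualCone F)
    (hyA : ∀ x : X, (inner ℝ (A x) y : ℝ) = 0) (hyb : (inner ℝ b y : ℝ) = 0) :
    Fmin ⊆ F ∩ {z : Y | (inner ℝ z y : ℝ) = 0} ∧ F ∩ {z : Y | (inner ℝ z y : ℝ) = 0} ⊆ F := by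
  have hperp : (inner ℝ (b - A xbar) y : ℝ) = 0 := by rw [inner_sub_left, hyA, hyb, sub_zero]
  have hFminPerp : Set.EqOn ((innerₗ Y).flip y) 0 Fmin :=
    ((innerₗ Y).flip y).eqOn_zero_of_nonneg_of_mem_intrinsicInterior_s6
      (fun z hz => hy z (hFminF hz)) hFmin hperp
  exact ⟨fun z hz => ⟨hFminF hz, hFminPerp hz⟩, Set.inter_subset_left⟩

theorem stmt6
    {X Y : Type*} [NormedAddCommGroup X] [InnerProductSpace ℝ X] [FiniteDimensional ℝ X]
    [NormedAddCommGroup Y] [InnerProductSpace ℝ Y] [FiniteDimensional ℝ Y]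
    (K : Set Y) (hKclosed : IsClosed K) (hKconv : Convex ℝ K)
    (hKcone : ∀ c : ℝ, 0 ≤ c → ∀ z ∈ K, c • z ∈ K)
    (A : X →ₗ[ℝ] Y) (b : Y)
    (xbar : X) (hxbar : xbar ∈ intrinsicInterior ℝ {x : X | b - A x ∈ K})
    (Fmin : Set Y) (hFminFace : IsFaceOf Fmin K)
    (hFmin : b - A xbar ∈ intrinsicInterior ℝ Fmin)
    (F : Set Y) (hFface : IsFaceOf F K) (hFminF : Fmin ⊆ F)
    (y : Y) (hy : y ∈ dualCone F)
    (hyA : ∀ x : X, (inner ℝ (A x) y : ℝ) = 0) (hyb : (inner ℝ b y : ℝ) = 0) :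
    Fmin ⊆ F ∩ {z : Y | (inner ℝ z y : ℝ) = 0} ∧ F ∩ {z : Y | (inner ℝ z y : ℝ) = 0} ⊆ F :=
  stmt6_general A b xbar Fmin hFmin F hFminF y hy hyA hyb
end

section
/- Suppose F is a face of K with F_min ⊆ F, and suppose there exists x with b − Ax ∈ ri F. Then F = F_min. -/
open Set AffineMap Topology

theorem IsFaceOf.isExtreme {E : Type*} [AddCommGroup E] [Module ℝ E] {F K : Set E}
    (h : IsFaceOf F K) : IsExtreme ℝ K F := by
  refine ⟨h.1, fun x hx y hy z hz ⟨a, c, ha, hc, hac, hxyz⟩ ↦ ?_⟩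
  obtain rfl : a = 1 - c := by linarith
  exact (h.2.2 x hx y hy (1 - c) ha (by linarith) (by rwa [sub_sub_cancel, hxyz])).1

theorem exists_mem_openSegment_of_mem_intrinsicInterior {E : Type*} [AddCommGroup E]
    [Module ℝ E] [TopologicalSpace E] [IsTopologicalAddGroup E] [ContinuousSMul ℝ E]
    {C : Set E} {y z : E} (hy : y ∈ intrinsicInterior ℝ C) (hz : z ∈ C) :
    ∃ w ∈ C, y ∈ openSegment ℝ z w := by
  obtain ⟨y, hyC, rfl⟩ := mem_intrinsicInterior.mp hy
  let g : ℝ → affineSpan ℝ C := fun t ↦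
    ⟨lineMap z y t, lineMap_mem t (subset_affineSpan ℝ C hz) y.2⟩
  have hg : Continuous g := lineMap_continuous.subtype_mk _
  have hg1 : g 1 = y := Subtype.ext (lineMap_apply_one z y)
  have hnear : ∀ᶠ t in 𝓝[>] (1 : ℝ), g t ∈ interior ((↑) ⁻¹' C) :=
    hg.continuousWithinAt.eventually_mem (by rw [hg1]; exact isOpen_interior.mem_nhds hyC)
  obtain ⟨t, hgt, ht⟩ := (hnear.and self_mem_nhdsWithin).exists
  have ht : 1 < t := ht
  have hwC : g t ∈ ((↑) ⁻¹' C : Set (affineSpan ℝ C)) := interior_subset hgt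
  refine ⟨lineMap z y t, hwC, ?_⟩
  rw [openSegment_eq_image_lineMap]
  refine ⟨t⁻¹, ⟨by positivity, inv_lt_one_of_one_lt₀ ht⟩, ?_⟩
  rw [lineMap_lineMap_right, inv_mul_cancel₀ (by positivity), lineMap_apply_one]

theorem IsExtreme.mapsTo_of_mem_intrinsicInterior {V W : Type*} [AddCommGroup V] [Module ℝ V]
    [TopologicalSpace V] [IsTopologicalAddGroup V] [ContinuousSMul ℝ V] [AddCommGroup W]
    [Module ℝ W] {K G : Set W} (hG : IsExtreme ℝ K G) (f : V →ᵃ[ℝ] W) {S : Set V}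
    (hS : MapsTo f S K) {y : V} (hy : y ∈ intrinsicInterior ℝ S) (hfy : f y ∈ G) :
    MapsTo f S G := by
  intro z hz
  obtain ⟨w, hw, hyzw⟩ := exists_mem_openSegment_of_mem_intrinsicInterior hy hz
  exact hG.left_mem_of_mem_openSegment (hS hz) (hS hw) hfy
    (image_openSegment ℝ f z w ▸ mem_image_of_mem f hyzw)

theorem stmt7_general
    {X Y : Type*} [NormedAddCommGroup X] [InnerProductSpace ℝ X]
    [NormedAddCommGroup Y] [InnerProductSpace ℝ Y]
    (K : Set Y)
    (A : X →ₗ[ℝ] Y) (b : Y)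
    (xbar : X) (hxbar : xbar ∈ intrinsicInterior ℝ {x : X | b - A x ∈ K})
    (Fmin : Set Y) (hFminFace : IsFaceOf Fmin K)
    (hFmin : b - A xbar ∈ intrinsicInterior ℝ Fmin)
    (F : Set Y) (hFface : IsFaceOf F K) (hFminF : Fmin ⊆ F)
    (hstrict : ∃ x : X, b - A x ∈ intrinsicInterior ℝ F) :
    F = Fmin := by
  obtain ⟨x, hx⟩ := hstrict
  have hFminExt := hFminFace.isExtreme
  let slack : X →ᵃ[ℝ] Y := AffineMap.const ℝ X b - A.toAffineMap
  have hxF : b - A x ∈ F := intrinsicInterior_subset hx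
  have hxFmin : b - A x ∈ Fmin :=
    hFminExt.mapsTo_of_mem_intrinsicInterior slack (fun _ h ↦ h) hxbar
      (intrinsicInterior_subset hFmin) (hFface.1 hxF)
  exact Subset.antisymm
    (hFminExt.mapsTo_of_mem_intrinsicInterior (AffineMap.id ℝ Y) hFface.1 hx hxFmin) hFminF

theorem stmt7
    {X Y : Type*} [NormedAddCommGroup X] [InnerProductSpace ℝ X] [FiniteDimensional ℝ X]
    [NormedAddCommGroup Y] [InnerProductSpace ℝ Y] [FiniteDimensional ℝ Y]
    (K : Set Y) (hKclosed : IsClosed K) (hKconv : Convex ℝ K)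
    (hKcone : ∀ c : ℝ, 0 ≤ c → ∀ z ∈ K, c • z ∈ K)
    (A : X →ₗ[ℝ] Y) (b : Y)
    (xbar : X) (hxbar : xbar ∈ intrinsicInterior ℝ {x : X | b - A x ∈ K})
    (Fmin : Set Y) (hFminFace : IsFaceOf Fmin K)
    (hFmin : b - A xbar ∈ intrinsicInterior ℝ Fmin)
    (F : Set Y) (hFface : IsFaceOf F K) (hFminF : Fmin ⊆ F)
    (hstrict : ∃ x : X, b - A x ∈ intrinsicInterior ℝ F) :
    F = Fmin :=
  stmt7_general K A b xbar hxbar Fmin hFminFace hFmin F hFface hFminF hstrict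
end

section
/- Let y_0 = 0, y_1, y_2, … be any sequence of vectors with y_i ∈ (K ∩ y_0^⊥ ∩ … ∩ y_{i−1}^⊥)* ∩ N((A,b)*) for each i ≥ 1, and set F_i = K ∩ y_0^⊥ ∩ … ∩ y_i^⊥. Then F_min ⊆ F_i for all i. -/
/-!
Each `y i` with `i ≥ 1` is orthogonal to the range of `A` and to `b`, hence to the slack
`b - A xbar`, which lies in the relative interior of `Fmin`. If `Fmin ⊆ F_{i-1}`, then
`⟪·, y i⟫` is nonnegative on `Fmin` and vanishes at a relative interior point, so it vanishes
on all of `Fmin`, i.e. `Fmin ⊆ F_i`.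
-/

open Filter Topology

theorem exists_add_smul_sub_mem_of_mem_intrinsicInterior {E : Type*} [AddCommGroup E]
    [Module ℝ E] [TopologicalSpace E] [IsTopologicalAddGroup E] [ContinuousSMul ℝ E]
    {s : Set E} {w z : E} (hw : w ∈ intrinsicInterior ℝ s) (hz : z ∈ s) :
    ∃ t : ℝ, 0 < t ∧ w + t • (w - z) ∈ s := by
  obtain ⟨w, hw, rfl⟩ := hw
  have hline (t : ℝ) : (w : E) + t • ((w : E) - z) ∈ affineSpan ℝ s := by
    simpa [vsub_eq_sub, vadd_eq_add, add_comm] using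
      AffineSubspace.smul_vsub_vadd_mem _ t w.2 (subset_affineSpan ℝ s hz) w.2
  let path : ℝ → affineSpan ℝ s := fun t => ⟨_, hline t⟩
  have hpath : Continuous path := by fun_prop
  have hnhds : ∀ᶠ t in 𝓝 (0 : ℝ), path t ∈ interior ((↑) ⁻¹' s) :=
    hpath.continuousAt.preimage_mem_nhds (by simpa [path] using isOpen_interior.mem_nhds hw)
  obtain ⟨t, ht, htpos⟩ :=
    ((hnhds.filter_mono nhdsWithin_le_nhds).and (self_mem_nhdsWithin (s := Set.Ioi 0))).exists
  exact ⟨t, htpos, interior_subset (s := ((↑) : affineSpan ℝ s → E) ⁻¹' s) ht⟩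

theorem eq_zero_of_nonneg_of_mem_intrinsicInterior {E : Type*} [AddCommGroup E]
    [Module ℝ E] [TopologicalSpace E] [IsTopologicalAddGroup E] [ContinuousSMul ℝ E]
    {s : Set E} {w : E} (hw : w ∈ intrinsicInterior ℝ s) (f : E →ₗ[ℝ] ℝ)
    (hf : ∀ z ∈ s, 0 ≤ f z) (hfw : f w = 0) {z : E} (hz : z ∈ s) : f z = 0 := by
  obtain ⟨t, ht, hmem⟩ := exists_add_smul_sub_mem_of_mem_intrinsicInterior hw hz
  have hext := hf _ hmem
  simp only [map_add, map_smul, map_sub, hfw, smul_eq_mul, zero_add, zero_sub] at hext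
  nlinarith [hf z hz]

theorem stmt9_general
    {X Y : Type*} [NormedAddCommGroup X] [InnerProductSpace ℝ X]
    [NormedAddCommGroup Y] [InnerProductSpace ℝ Y]
    (K : Set Y)
    (A : X →ₗ[ℝ] Y) (b : Y)
    (xbar : X) (Fmin : Set Y) (hFminFace : IsFaceOf Fmin K)
    (hFmin : b - A xbar ∈ intrinsicInterior ℝ Fmin)
    (y : ℕ → Y) (hy0 : y 0 = 0)
    (hy : ∀ i : ℕ, 1 ≤ i →
      y i ∈ dualCone (K ∩ {z : Y | ∀ j : ℕ, j < i → (inner ℝ z (y j) : ℝ) = 0}) ∧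
      (∀ x : X, (inner ℝ (A x) (y i) : ℝ) = 0) ∧ (inner ℝ b (y i) : ℝ) = 0) :
    ∀ i : ℕ, Fmin ⊆ K ∩ {z : Y | ∀ j : ℕ, j ≤ i → (inner ℝ z (y j) : ℝ) = 0} := by
  intro i
  induction i with
  | zero =>
    intro z hz
    exact ⟨hFminFace.1 hz, fun j hj => by simp [Nat.le_zero.mp hj, hy0]⟩
  | succ i ih =>
    obtain ⟨hdual, hA, hb⟩ := hy (i + 1) i.succ_pos
    have hslack : inner ℝ (b - A xbar) (y (i + 1)) = (0 : ℝ) := by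
      rw [inner_sub_left, hA, hb, sub_zero]
    have hnonneg (z : Y) (hz : z ∈ Fmin) : 0 ≤ (inner ℝ z (y (i + 1)) : ℝ) :=
      hdual z ⟨(ih hz).1, fun j hj => (ih hz).2 j (Nat.lt_succ_iff.mp hj)⟩
    intro z hz
    refine ⟨hFminFace.1 hz, fun j hj => ?_⟩
    rcases hj.eq_or_lt with rfl | hj
    · exact eq_zero_of_nonneg_of_mem_intrinsicInterior hFmin ((innerₗ Y).flip (y (i + 1)))
        hnonneg hslack hz
    · exact (ih hz).2 j (Nat.lt_succ_iff.mp hj)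

theorem stmt9
    {X Y : Type*} [NormedAddCommGroup X] [InnerProductSpace ℝ X] [FiniteDimensional ℝ X]
    [NormedAddCommGroup Y] [InnerProductSpace ℝ Y] [FiniteDimensional ℝ Y]
    (K : Set Y) (hKclosed : IsClosed K) (hKconv : Convex ℝ K)
    (hKcone : ∀ c : ℝ, 0 ≤ c → ∀ z ∈ K, c • z ∈ K)
    (A : X →ₗ[ℝ] Y) (b : Y)
    (xbar : X) (hxbar : xbar ∈ intrinsicInterior ℝ {x : X | b - A x ∈ K})
    (Fmin : Set Y) (hFminFace : IsFaceOf Fmin K)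
    (hFmin : b - A xbar ∈ intrinsicInterior ℝ Fmin)
    (y : ℕ → Y) (hy0 : y 0 = 0)
    (hy : ∀ i : ℕ, 1 ≤ i →
      y i ∈ dualCone (K ∩ {z : Y | ∀ j : ℕ, j < i → (inner ℝ z (y j) : ℝ) = 0}) ∧
      (∀ x : X, (inner ℝ (A x) (y i) : ℝ) = 0) ∧ (inner ℝ b (y i) : ℝ) = 0) :
    ∀ i : ℕ, Fmin ⊆ K ∩ {z : Y | ∀ j : ℕ, j ≤ i → (inner ℝ z (y j) : ℝ) = 0} :=
  stmt9_general K A b xbar Fmin hFminFace hFmin y hy0 hy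
end

section
/- In the facial reduction algorithm, the number of reducing iterations (iterations i where F_i ⊊ F_{i−1}) is at most min(ℓ_K − 1, dim L), where ℓ_K is the length of the longest chain of faces of K and L = N((A,b)*). In particular, if y_{i_1}, …, y_{i_k} are the certificates from reducing iterations, they are linearly independent, so k ≤ dim L. -/
/-!
Each reducing certificate `y_{i_j}` vanishes on the face `F_{i_j}` but not on the preceding face
`F_{i_j - 1}`, which is contained in the faces on which all earlier certificates vanish. Pairing a
vanishing linear combination with a point of `F_{i_j - 1}`, for the last index `j` carrying a
nonzero coefficient, kills every term but the `j`-th; so the certificates are linearly independent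
vectors of `L`. Each `F_i` is a face of `K` (an exposed face of a face), and the reducing steps give
the strict chain `F_{i_k} ⊊ ⋯ ⊊ F_{i_1} ⊊ F_0 = K` of `k + 1` faces.
-/

open scoped RealInnerProductSpace

theorem LinearIndependent.card_le_finrank_of_forall_mem {R M ι : Type*} [Semiring R]
    [StrongRankCondition R] [Nontrivial R] [AddCommMonoid M] [Module R M] [Fintype ι] {v : ι → M}
    (hv : LinearIndependent R v) {L : Submodule R M} [Module.Finite R L] (hL : ∀ i, v i ∈ L) :
    Fintype.card ι ≤ Module.finrank R L :=
  (finrank_span_eq_card hv).symm.trans_le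
    (Submodule.finrank_mono (Submodule.span_le.mpr (Set.range_subset_iff.mpr hL)))

section Chains

variable {α : Type*} {F : ℕ → Set α}

theorem ne_zero_of_ssubset_sub_one {n : ℕ} (hred : F n ⊂ F (n - 1)) : n ≠ 0 := by
  rintro rfl
  exact hred.ne rfl

theorem Antitone.strictAnti_comp_of_ssubset_sub_one {ι : Type*} [Preorder ι] (hF : Antitone F)
    {n : ι → ℕ} (hn : StrictMono n) (hred : ∀ ⦃a b⦄, a < b → F (n b) ⊂ F (n b - 1)) :
    StrictAnti (F ∘ n) :=
  fun _ _ hab => (hred hab).trans_le (hF (Nat.le_sub_one_of_lt (hn hab)))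

theorem Antitone.strictAnti_comp_cons_zero (hF : Antitone F) {k : ℕ} {idx : Fin k → ℕ}
    (hidx : StrictMono idx) (hred : ∀ j, F (idx j) ⊂ F (idx j - 1)) :
    StrictAnti (F ∘ Fin.cons 0 idx) := by
  have hpos (j : Fin k) : 0 < idx j := Nat.pos_of_ne_zero (ne_zero_of_ssubset_sub_one (hred j))
  refine hF.strictAnti_comp_of_ssubset_sub_one (Fin.strictMono_cons.mpr ⟨hpos, hidx⟩) ?_
  intro a b hab
  obtain ⟨j, rfl⟩ := Fin.exists_succ_eq.mpr ((Fin.zero_le a).trans_lt hab).ne'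
  simpa using hred j

end Chains

section Faces

variable {E : Type*} [NormedAddCommGroup E] [InnerProductSpace ℝ E]

theorem isFaceOf_self {K : Set E} (hK : Convex ℝ K) : IsFaceOf K K :=
  ⟨subset_rfl, hK, fun _ hx _ hz _ _ _ _ => ⟨hx, hz⟩⟩

theorem convex_setOf_inner_eq_zero (v : E) : Convex ℝ {z : E | ⟪z, v⟫ = 0} :=
  convex_hyperplane ((innerₛₗ ℝ).flip v).isLinear 0

theorem IsFaceOf.inter_setOf_inner_eq_zero {F K : Set E} {v : E} (hF : IsFaceOf F K)
    (hv : v ∈ dualCone F) : IsFaceOf (F ∩ {z | ⟪z, v⟫ = 0}) K := by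
  refine ⟨Set.inter_subset_left.trans hF.1, hF.2.1.inter (convex_setOf_inner_eq_zero v), ?_⟩
  rintro x hx z hz t ht0 ht1 ⟨hmemF, hmem⟩
  obtain ⟨hxF, hzF⟩ := hF.2.2 x hx z hz t ht0 ht1 hmemF
  have hxv : 0 ≤ ⟪x, v⟫ := hv x hxF
  have hzv : 0 ≤ ⟪z, v⟫ := hv z hzF
  have hsum : t * ⟪x, v⟫ + (1 - t) * ⟪z, v⟫ = 0 := by
    simpa only [Set.mem_ofPred_eq, inner_add_left, real_inner_smul_left] using hmem
  refine ⟨⟨hxF, ?_⟩, ⟨hzF, ?_⟩⟩ <;> simp only [Set.mem_ofPred_eq] <;> nlinarith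

theorem perpSpan_anti {S T : Set E} (h : S ⊆ T) : perpSpan T ⊆ perpSpan S :=
  fun _ hv x hx => hv x (h hx)

theorem linearIndependent_of_mem_perpSpan_of_lt {ι : Type*} [LinearOrder ι] [Fintype ι]
    {v : ι → E} {S : ι → Set E} (hnot : ∀ j, v j ∉ perpSpan (S j))
    (hlt : ∀ ⦃i j⦄, i < j → v i ∈ perpSpan (S j)) : LinearIndependent ℝ v := by
  classical
  rw [Fintype.linearIndependent_iff]
  intro g hg
  by_contra! hne
  obtain ⟨i₀, hi₀⟩ := hne
  have hsupp : (Finset.univ.filter fun i => g i ≠ 0).Nonempty := ⟨i₀, by simpa using hi₀⟩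
  set j := (Finset.univ.filter fun i => g i ≠ 0).max' hsupp
  have hgj : g j ≠ 0 := (Finset.mem_filter.mp (Finset.max'_mem _ hsupp)).2
  refine hnot j fun z hz => ?_
  have hpair : ∑ i, g i * ⟪z, v i⟫ = 0 := by
    simpa only [inner_sum, real_inner_smul_right, inner_zero_right] using congrArg (⟪z, ·⟫) hg
  rw [Finset.sum_eq_single_of_mem j (Finset.mem_univ j)] at hpair
  · exact (mul_eq_zero.mp hpair).resolve_left hgj
  intro i _ hij
  by_cases hgi : g i = 0
  · rw [hgi, zero_mul]
  · have hle : i ≤ j := Finset.le_max' _ i (by simpa using hgi)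
    rw [hlt (hle.lt_of_ne hij) z hz, mul_zero]

end Faces

section FacialReduction

variable {E : Type*} [NormedAddCommGroup E] [InnerProductSpace ℝ E] {y : ℕ → E} {F : ℕ → Set E}

theorem antitone_of_eq_inter_setOf_inner_eq_zero
    (hF : ∀ i, F (i + 1) = F i ∩ {z | ⟪z, y (i + 1)⟫ = 0}) : Antitone F :=
  antitone_nat_of_succ_le fun i => (hF i).le.trans Set.inter_subset_left

theorem isFaceOf_of_eq_inter_setOf_inner_eq_zero {K : Set E} (hK : Convex ℝ K) (h0 : F 0 = K)
    (hdual : ∀ i, y (i + 1) ∈ dualCone (F i))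
    (hF : ∀ i, F (i + 1) = F i ∩ {z | ⟪z, y (i + 1)⟫ = 0}) (i : ℕ) : IsFaceOf (F i) K := by
  induction i with
  | zero => exact h0.symm ▸ isFaceOf_self hK
  | succ n ih => exact hF n ▸ ih.inter_setOf_inner_eq_zero (hdual n)

theorem mem_perpSpan_of_eq_inter_setOf_inner_eq_zero
    (hF : ∀ i, F (i + 1) = F i ∩ {z | ⟪z, y (i + 1)⟫ = 0}) {n : ℕ} (hn : n ≠ 0) :
    y n ∈ perpSpan (F n) := by
  obtain ⟨m, rfl⟩ := Nat.exists_eq_succ_of_ne_zero hn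
  exact fun z hz => ((hF m).le hz).2

theorem notMem_perpSpan_of_eq_inter_setOf_inner_eq_zero
    (hF : ∀ i, F (i + 1) = F i ∩ {z | ⟪z, y (i + 1)⟫ = 0}) {n : ℕ} (hred : F n ⊂ F (n - 1)) :
    y n ∉ perpSpan (F (n - 1)) := by
  intro hperp
  cases n with
  | zero => exact hred.ne rfl
  | succ m => exact hred.not_subset fun z hz => (hF m).ge ⟨hz, hperp z hz⟩

end FacialReduction

theorem stmt10_general
    {Y : Type*} [NormedAddCommGroup Y] [InnerProductSpace ℝ Y] [FiniteDimensional ℝ Y]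
    (K : Set Y) (hKconv : Convex ℝ K) (L : Submodule ℝ Y)
    (y : ℕ → Y) (F : ℕ → Set Y) (hF0 : F 0 = K)
    (hstep : ∀ i : ℕ, y (i + 1) ∈ dualCone (F i) ∧ y (i + 1) ∈ L ∧
      F (i + 1) = F i ∩ {z : Y | (inner ℝ z (y (i + 1)) : ℝ) = 0})
    (k : ℕ) (idx : Fin k → ℕ) (hmono : StrictMono idx)
    (hred : ∀ j : Fin k, F (idx j) ⊂ F (idx j - 1))
    (ℓK : ℕ)
    (hchain : ∀ (m : ℕ) (G : Fin m → Set Y),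
      (∀ j : Fin m, IsFaceOf (G j) K) → StrictMono G → m ≤ ℓK) :
    LinearIndependent ℝ (fun j : Fin k => y (idx j)) ∧
    k ≤ min (ℓK - 1) (Module.finrank ℝ L) := by
  have hF (i : ℕ) := (hstep i).2.2
  have hanti : Antitone F := antitone_of_eq_inter_setOf_inner_eq_zero hF
  have hne (j : Fin k) : idx j ≠ 0 := ne_zero_of_ssubset_sub_one (hred j)
  have hli : LinearIndependent ℝ (fun j : Fin k => y (idx j)) := by
    refine linearIndependent_of_mem_perpSpan_of_lt (S := fun j => F (idx j - 1))
      (fun j => notMem_perpSpan_of_eq_inter_setOf_inner_eq_zero hF (hred j)) fun i j hij => ?_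
    exact perpSpan_anti (hanti (Nat.le_sub_one_of_lt (hmono hij)))
      (mem_perpSpan_of_eq_inter_setOf_inner_eq_zero hF (hne i))
  have hyL (j : Fin k) : y (idx j) ∈ L := by
    obtain ⟨m, hm⟩ := Nat.exists_eq_succ_of_ne_zero (hne j)
    exact hm ▸ (hstep m).2.1
  have hlen : k + 1 ≤ ℓK := by
    simpa using hchain (k + 1) (F ∘ Fin.cons 0 idx ∘ Fin.rev)
      (fun j => isFaceOf_of_eq_inter_setOf_inner_eq_zero hKconv hF0 (fun i => (hstep i).1) hF _)
      ((hanti.strictAnti_comp_cons_zero hmono hred).comp Fin.rev_strictAnti)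
  have hdim : k ≤ Module.finrank ℝ L := by
    simpa using hli.card_le_finrank_of_forall_mem hyL
  exact ⟨hli, le_min (by omega) hdim⟩

theorem stmt10
    {X Y : Type*} [NormedAddCommGroup X] [InnerProductSpace ℝ X] [FiniteDimensional ℝ X]
    [NormedAddCommGroup Y] [InnerProductSpace ℝ Y] [FiniteDimensional ℝ Y]
    (K : Set Y) (hKclosed : IsClosed K) (hKconv : Convex ℝ K)
    (hKcone : ∀ c : ℝ, 0 ≤ c → ∀ z ∈ K, c • z ∈ K)
    (A : X →ₗ[ℝ] Y) (b : Y)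
    (xbar : X) (hxbar : xbar ∈ intrinsicInterior ℝ {x : X | b - A x ∈ K})
    (Fmin : Set Y) (hFminFace : IsFaceOf Fmin K)
    (hFmin : b - A xbar ∈ intrinsicInterior ℝ Fmin)
    (L : Submodule ℝ Y) (hL : L = (LinearMap.range A ⊔ Submodule.span ℝ {b})ᗮ)
    (y : ℕ → Y) (F : ℕ → Set Y) (hy0 : y 0 = 0) (hF0 : F 0 = K)
    (hstep : ∀ i : ℕ, y (i + 1) ∈ dualCone (F i) ∧ y (i + 1) ∈ L ∧
      F (i + 1) = F i ∩ {z : Y | (inner ℝ z (y (i + 1)) : ℝ) = 0})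
    (k : ℕ) (idx : Fin k → ℕ) (hmono : StrictMono idx) (hpos : ∀ j : Fin k, 1 ≤ idx j)
    (hred : ∀ j : Fin k, F (idx j) ⊂ F (idx j - 1))
    (ℓK : ℕ)
    (hchain : ∀ (m : ℕ) (G : Fin m → Set Y),
      (∀ j : Fin m, IsFaceOf (G j) K) → StrictMono G → m ≤ ℓK) :
    LinearIndependent ℝ (fun j : Fin k => y (idx j)) ∧
    k ≤ min (ℓK - 1) (Module.finrank ℝ L) :=
  stmt10_general K hKconv L y F hF0 hstep k idx hmono hred ℓK hchain
end

section
/- The set {(u,v) : u ∈ K*, v ∈ tan(u, K*)} is a convex cone (though possibly not closed). -/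
/-!
Directions are transported by linear maps: if `f` maps `C` into `D`, it maps `dir(u, C)` into
`dir(f u, D)`, hence, being continuous and odd, `tan(u, C)` into `tan(f u, D)`. For convex `C`, a
pair of directions at `u₁` and `u₂` is a direction of `C × C` at `(u₁, u₂)` (shrink both steps to
the smaller one). Applying the transport to `(x, y) ↦ a • x + b • y`, which maps `C × C` into `C`,
gives convexity of `{(u, v) | u ∈ C, v ∈ tan(u, C)}`, and applying it to `x ↦ a • x` gives
invariance under positive scaling when `C` is a cone. The dual cone is a convex cone.
-/

open Set

section Dual

variable {E : Type*} [NormedAddCommGroup E] [InnerProductSpace ℝ E]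

lemma convex_dualCone (S : Set E) : Convex ℝ (dualCone S) := by
  intro y₁ hy₁ y₂ hy₂ a b ha hb _ x hx
  have h₁ := hy₁ x hx
  have h₂ := hy₂ x hx
  simp only [inner_add_right, real_inner_smul_right]
  positivity

lemma smul_mem_dualCone {S : Set E} {a : ℝ} (ha : 0 ≤ a) {y : E} (hy : y ∈ dualCone S) :
    a • y ∈ dualCone S := fun x hx => by
  rw [real_inner_smul_right]
  exact mul_nonneg ha (hy x hx)

end Dual

section Directions

variable {E F : Type*} [AddCommGroup E] [Module ℝ E] [AddCommGroup F] [Module ℝ F]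

lemma Convex.add_smul_mem_of_le {C : Set E} (hC : Convex ℝ C) {u y : E} {s t : ℝ}
    (hu : u ∈ C) (ht : u + t • y ∈ C) (hs : 0 ≤ s) (hst : s ≤ t) : u + s • y ∈ C := by
  rcases hs.trans hst |>.eq_or_lt with rfl | htpos
  · simpa [le_antisymm hst hs] using hu
  have hmem := hC.add_smul_mem hu ht ⟨div_nonneg hs htpos.le, (div_le_one htpos).2 hst⟩
  rwa [smul_smul, div_mul_cancel₀ s htpos.ne'] at hmem

lemma Set.MapsTo.dirCone {C : Set E} {D : Set F} (f : E →ₗ[ℝ] F) (hf : MapsTo f C D) (u : E) :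
    MapsTo f (dirCone u C) (dirCone (f u) D) := by
  rintro y ⟨t, ht, hy⟩
  refine ⟨t, ht, ?_⟩
  simpa only [map_add, map_smul] using hf hy

lemma Convex.prodMk_mem_dirCone {C : Set E} {D : Set F} (hC : Convex ℝ C) (hD : Convex ℝ D)
    {u₁ y₁ : E} {u₂ y₂ : F} (hu₁ : u₁ ∈ C) (hu₂ : u₂ ∈ D)
    (hy₁ : y₁ ∈ dirCone u₁ C) (hy₂ : y₂ ∈ dirCone u₂ D) :
    (y₁, y₂) ∈ dirCone (u₁, u₂) (C ×ˢ D) := by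
  obtain ⟨t₁, ht₁, h₁⟩ := hy₁
  obtain ⟨t₂, ht₂, h₂⟩ := hy₂
  exact ⟨min t₁ t₂, lt_min ht₁ ht₂,
    hC.add_smul_mem_of_le hu₁ h₁ (lt_min ht₁ ht₂).le (min_le_left _ _),
    hD.add_smul_mem_of_le hu₂ h₂ (lt_min ht₁ ht₂).le (min_le_right _ _)⟩

variable [TopologicalSpace E] [TopologicalSpace F]

lemma Set.MapsTo.tanSpace {C : Set E} {D : Set F} (f : E →L[ℝ] F) (hf : MapsTo f C D) (u : E) :
    MapsTo f (tanSpace u C) (tanSpace (f u) D) := by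
  have hcl := (hf.dirCone (f : E →ₗ[ℝ] F) u).closure f.continuous
  rintro v ⟨hv, hv'⟩
  refine ⟨hcl hv, ?_⟩
  rw [mem_neg, ← map_neg]
  exact hcl hv'

lemma Convex.prodMk_mem_tanSpace {C : Set E} {D : Set F} (hC : Convex ℝ C) (hD : Convex ℝ D)
    {u₁ v₁ : E} {u₂ v₂ : F} (hu₁ : u₁ ∈ C) (hu₂ : u₂ ∈ D)
    (hv₁ : v₁ ∈ tanSpace u₁ C) (hv₂ : v₂ ∈ tanSpace u₂ D) :
    (v₁, v₂) ∈ tanSpace (u₁, u₂) (C ×ˢ D) := by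
  have hsub : closure (dirCone u₁ C) ×ˢ closure (dirCone u₂ D) ⊆
      closure (dirCone (u₁, u₂) (C ×ˢ D)) := by
    rw [← closure_prod_eq]
    exact closure_mono fun y hy => hC.prodMk_mem_dirCone hD hu₁ hu₂ hy.1 hy.2
  exact ⟨hsub ⟨hv₁.1, hv₂.1⟩, hsub ⟨hv₁.2, hv₂.2⟩⟩

def tanBundle (C : Set E) : Set (E × E) :=
  {p | p.1 ∈ C ∧ p.2 ∈ tanSpace p.1 C}

lemma smul_mem_tanBundle {C : Set E} [ContinuousConstSMul ℝ E] {a : ℝ}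
    (hC : ∀ z ∈ C, a • z ∈ C) {p : E × E} (hp : p ∈ tanBundle C) : a • p ∈ tanBundle C :=
  ⟨hC _ hp.1, (MapsTo.tanSpace (a • ContinuousLinearMap.id ℝ E) hC p.1) hp.2⟩

lemma Convex.tanBundle [ContinuousAdd E] [ContinuousConstSMul ℝ E] {C : Set E}
    (hC : Convex ℝ C) : Convex ℝ (tanBundle C) := by
  rintro ⟨u₁, v₁⟩ ⟨hu₁, hv₁⟩ ⟨u₂, v₂⟩ ⟨hu₂, hv₂⟩ a b ha hb hab
  let f : E × E →L[ℝ] E := a • ContinuousLinearMap.fst ℝ E E + b • ContinuousLinearMap.snd ℝ E E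
  have hf : MapsTo f (C ×ˢ C) C := fun x hx => hC hx.1 hx.2 ha hb hab
  exact ⟨hC hu₁ hu₂ ha hb hab,
    hf.tanSpace f (u₁, u₂) (hC.prodMk_mem_tanSpace hC hu₁ hu₂ hv₁ hv₂)⟩

end Directions

theorem stmt11_general {E : Type*} [NormedAddCommGroup E] [InnerProductSpace ℝ E]
    (K : Set E) :
    Convex ℝ {p : E × E | p.1 ∈ dualCone K ∧ p.2 ∈ tanSpace p.1 (dualCone K)} ∧
    ∀ a : ℝ, 0 < a → ∀ p ∈ {p : E × E | p.1 ∈ dualCone K ∧ p.2 ∈ tanSpace p.1 (dualCone K)},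
      a • p ∈ {p : E × E | p.1 ∈ dualCone K ∧ p.2 ∈ tanSpace p.1 (dualCone K)} :=
  ⟨(convex_dualCone K).tanBundle,
    fun _ ha _ hp => smul_mem_tanBundle (fun _ hz => smul_mem_dualCone ha.le hz) hp⟩

theorem stmt11 {E : Type*} [NormedAddCommGroup E] [InnerProductSpace ℝ E]
    [FiniteDimensional ℝ E]
    (K : Set E) (hKclosed : IsClosed K) (hKconv : Convex ℝ K)
    (hKcone : ∀ c : ℝ, 0 ≤ c → ∀ z ∈ K, c • z ∈ K) :
    Convex ℝ {p : E × E | p.1 ∈ dualCone K ∧ p.2 ∈ tanSpace p.1 (dualCone K)} ∧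
    ∀ a : ℝ, 0 < a → ∀ p ∈ {p : E × E | p.1 ∈ dualCone K ∧ p.2 ∈ tanSpace p.1 (dualCone K)},
      a • p ∈ {p : E × E | p.1 ∈ dualCone K ∧ p.2 ∈ tanSpace p.1 (dualCone K)} :=
  stmt11_general K
end

section
/- Let K be a nice closed convex cone (K* + F^⊥ is closed for every face F of K), let u_0 = 0, and let u_1, …, u_k ∈ K* and v_1, …, v_k with v_i ∈ (K ∩ (u_0 + ⋯ + u_{i−1})^⊥)^⊥ for each i. Then for each i, K ∩ (u_0+⋯+u_{i−1})^⊥ ∩ (u_i+v_i)^⊥ = K ∩ (u_0+⋯+u_i)^⊥. -/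
/-! On `K` the pairings with elements of `K*` are nonnegative, so `⟨z, w + u⟩ = 0` forces
`⟨z, w⟩ = ⟨z, u⟩ = 0`; and on `K ∩ w^⊥` the perturbation `v` pairs to zero, so it does not
change the constraint `⟨z, u + v⟩ = 0`. -/

section DualCone

variable {E : Type*} [NormedAddCommGroup E] [InnerProductSpace ℝ E] {K : Set E}

theorem zero_mem_dualCone : (0 : E) ∈ dualCone K :=
  fun x _ => (inner_zero_right x).ge

theorem sum_mem_dualCone {ι : Type*} {s : Finset ι} {u : ι → E}
    (h : ∀ j ∈ s, u j ∈ dualCone K) : ∑ j ∈ s, u j ∈ dualCone K := by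
  intro x hx
  rw [inner_sum]
  exact Finset.sum_nonneg fun j hj => h j hj x hx

theorem inter_inner_add_eq_zero_eq_of_mem_dualCone {w u v : E}
    (hw : w ∈ dualCone K) (hu : u ∈ dualCone K)
    (hv : v ∈ perpSpan (K ∩ {z : E | (inner ℝ z w : ℝ) = 0})) :
    K ∩ {z : E | (inner ℝ z w : ℝ) = 0} ∩ {z : E | (inner ℝ z (u + v) : ℝ) = 0}
      = K ∩ {z : E | (inner ℝ z (w + u) : ℝ) = 0} := by
  ext z
  simp only [Set.mem_inter_iff, Set.mem_ofPred_eq, inner_add_right]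
  constructor
  · rintro ⟨⟨hzK, hzw⟩, hzuv⟩
    rw [hv z ⟨hzK, hzw⟩, add_zero] at hzuv
    exact ⟨hzK, by rw [hzw, hzuv, add_zero]⟩
  · rintro ⟨hzK, hzwu⟩
    obtain ⟨hzw, hzu⟩ := (add_eq_zero_iff_of_nonneg (hw z hzK) (hu z hzK)).1 hzwu
    exact ⟨⟨hzK, hzw⟩, by rw [hzu, hv z ⟨hzK, hzw⟩, add_zero]⟩

end DualCone

open Pointwise in
theorem stmt13_general {E : Type*} [NormedAddCommGroup E] [InnerProductSpace ℝ E]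
    (K : Set E)
    (k : ℕ) (u v : ℕ → E) (hu0 : u 0 = 0)
    (hu : ∀ i : ℕ, 1 ≤ i → i ≤ k → u i ∈ dualCone K)
    (hv : ∀ i : ℕ, 1 ≤ i → i ≤ k →
      v i ∈ perpSpan (K ∩ {z : E | (inner ℝ z (∑ j ∈ Finset.range i, u j) : ℝ) = 0})) :
    ∀ i : ℕ, 1 ≤ i → i ≤ k →
      K ∩ {z : E | (inner ℝ z (∑ j ∈ Finset.range i, u j) : ℝ) = 0}
        ∩ {z : E | (inner ℝ z (u i + v i) : ℝ) = 0}
      = K ∩ {z : E | (inner ℝ z (∑ j ∈ Finset.range (i + 1), u j) : ℝ) = 0} := by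
  intro i hi1 hik
  have hpartial : ∑ j ∈ Finset.range i, u j ∈ dualCone K := by
    refine sum_mem_dualCone fun j hj => ?_
    rcases j.eq_zero_or_pos with rfl | hj0
    · exact hu0 ▸ zero_mem_dualCone
    · exact hu j hj0 ((Finset.mem_range.mp hj).le.trans hik)
  rw [Finset.sum_range_succ]
  exact inter_inner_add_eq_zero_eq_of_mem_dualCone hpartial (hu i hi1 hik) (hv i hi1 hik)

open Pointwise in
theorem stmt13 {E : Type*} [NormedAddCommGroup E] [InnerProductSpace ℝ E]
    [FiniteDimensional ℝ E]
    (K : Set E) (hKclosed : IsClosed K) (hKconv : Convex ℝ K)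
    (hKcone : ∀ c : ℝ, 0 ≤ c → ∀ z ∈ K, c • z ∈ K)
    (hnice : ∀ F : Set E, IsFaceOf F K → IsClosed (dualCone K + perpSpan F))
    (k : ℕ) (u v : ℕ → E) (hu0 : u 0 = 0)
    (hu : ∀ i : ℕ, 1 ≤ i → i ≤ k → u i ∈ dualCone K)
    (hv : ∀ i : ℕ, 1 ≤ i → i ≤ k →
      v i ∈ perpSpan (K ∩ {z : E | (inner ℝ z (∑ j ∈ Finset.range i, u j) : ℝ) = 0})) :
    ∀ i : ℕ, 1 ≤ i → i ≤ k →
      K ∩ {z : E | (inner ℝ z (∑ j ∈ Finset.range i, u j) : ℝ) = 0}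
        ∩ {z : E | (inner ℝ z (u i + v i) : ℝ) = 0}
      = K ∩ {z : E | (inner ℝ z (∑ j ∈ Finset.range (i + 1), u j) : ℝ) = 0} :=
  stmt13_general K k u v hu0 hu hv
end

section
/- If K is a nice closed convex cone and F = K ∩ u^⊥ for some u ∈ K*, then the dual cone of F satisfies F* = K* + tan(u, K*). -/
open Set Pointwise

lemma dirCone_eq_sup_span_singleton {V : Type*} [AddCommGroup V] [Module ℝ V]
    {C : PointedCone ℝ V} {u : V} (hu : u ∈ C) :
    dirCone u (C : Set V) =
      ((C ⊔ PointedCone.ofSubmodule (ℝ ∙ u) : PointedCone ℝ V) : Set V) := by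
  ext y
  rw [SetLike.mem_coe, Submodule.mem_sup]
  constructor
  · rintro ⟨t, ht, hty⟩
    refine ⟨t⁻¹ • (u + t • y), C.smul_mem (by positivity) hty, (-t⁻¹) • u,
      Submodule.smul_mem _ _ (Submodule.mem_span_singleton_self u), ?_⟩
    rw [smul_add, smul_smul, inv_mul_cancel₀ ht.ne', one_smul, neg_smul]
    abel
  · rintro ⟨d, hd, _, hl, rfl⟩
    obtain ⟨c, rfl⟩ := Submodule.mem_span_singleton.1 hl
    set t := (1 + |c|)⁻¹
    have ht : 0 < t := by positivity
    have hcoef : 0 ≤ 1 + t * c := by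
      have ht_mul : t * (1 + |c|) = 1 := inv_mul_cancel₀ (by positivity)
      rw [show 1 + t * c = t * (1 + |c| + c) by linear_combination -ht_mul]
      exact mul_nonneg ht.le (by linarith [neg_abs_le c])
    refine ⟨t, ht, ?_⟩
    rw [show u + t • (d + c • u) = (1 + t * c) • u + t • d by module]
    exact C.add_mem (C.smul_mem hcoef hu) (C.smul_mem ht.le hd)

lemma exists_pointedCone_coe_eq {V : Type*} [AddCommGroup V] [Module ℝ V] {K : Set V}
    (hne : K.Nonempty) (hconv : Convex ℝ K) (hcone : ∀ c : ℝ, 0 ≤ c → ∀ z ∈ K, c • z ∈ K) :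
    ∃ C : PointedCone ℝ V, (C : Set V) = K := by
  have hK : (ConvexCone.hull ℝ K : Set V) = K := by
    refine Subset.antisymm (fun x hx => ?_) ConvexCone.subset_hull
    obtain ⟨r, hr, y, hy, rfl⟩ := (ConvexCone.mem_hull_of_convex hconv).1 hx
    exact hcone r hr.le y hy
  obtain ⟨k, hk⟩ := hne
  have h0 : (ConvexCone.hull ℝ K).Pointed := by
    rw [ConvexCone.Pointed, ← SetLike.mem_coe, hK]
    simpa using hcone 0 le_rfl k hk
  exact ⟨(ConvexCone.hull ℝ K).toPointedCone h0, hK⟩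

section InnerProductSpace

variable {E : Type*} [NormedAddCommGroup E] [InnerProductSpace ℝ E]

lemma dualCone_anti {S T : Set E} (h : S ⊆ T) : dualCone T ⊆ dualCone S :=
  fun _ hy x hx => hy x (h hx)

lemma dualCone_closure (S : Set E) : dualCone (closure S) = dualCone S := by
  refine (dualCone_anti subset_closure).antisymm fun y hy => ?_
  have : closure S ⊆ {x | 0 ≤ (inner ℝ x y : ℝ)} :=
    closure_minimal hy (isClosed_le continuous_const (continuous_id.inner continuous_const))
  exact fun x hx => this hx

lemma dualCone_inter_neg (S : Set E) : dualCone S ∩ -dualCone S = perpSpan S := by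
  ext y
  simp only [dualCone, perpSpan, mem_inter_iff, mem_neg, mem_ofPred_eq, inner_neg_right,
    neg_nonneg]
  exact ⟨fun h x hx => (h.2 x hx).antisymm (h.1 x hx),
    fun h => ⟨fun x hx => (h x hx).ge, fun x hx => (h x hx).le⟩⟩

lemma add_perpSpan_subset_dualCone {F K : Set E} (hFK : F ⊆ K) :
    dualCone K + perpSpan F ⊆ dualCone F := by
  rintro _ ⟨w, hw, p, hp, rfl⟩ x hx
  rw [inner_add_right, hp x hx, add_zero]
  exact hw x (hFK hx)

lemma dualCone_sup_span_singleton (C : PointedCone ℝ E) (u : E) :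
    dualCone ((C ⊔ PointedCone.ofSubmodule (ℝ ∙ u) : PointedCone ℝ E) : Set E) =
      dualCone C ∩ {z | (inner ℝ z u : ℝ) = 0} := by
  ext z
  constructor
  · intro hz
    have hline (c : ℝ) : 0 ≤ c * (inner ℝ z u : ℝ) := by
      rw [← real_inner_smul_right, real_inner_comm]
      exact hz _ (Submodule.mem_sup_right
        (Submodule.smul_mem _ c (Submodule.mem_span_singleton_self u)))
    refine ⟨fun x hx => hz x (Submodule.mem_sup_left hx), ?_⟩
    have := hline (-1)
    have := hline 1
    simp only [mem_ofPred_eq]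
    linarith
  · rintro ⟨hzC, hzu⟩ x hx
    obtain ⟨d, hd, _, hl, rfl⟩ := Submodule.mem_sup.1 hx
    obtain ⟨c, rfl⟩ := Submodule.mem_span_singleton.1 hl
    rw [inner_add_left, real_inner_smul_left, real_inner_comm z u, hzu.out, mul_zero, add_zero]
    exact hzC d hd

lemma isFaceOf_inter_orthogonal {K : Set E} (hK : Convex ℝ K) {u : E} (hu : u ∈ dualCone K) :
    IsFaceOf (K ∩ {z | (inner ℝ z u : ℝ) = 0}) K := by
  have hlin : IsLinearMap ℝ fun z : E => (inner ℝ z u : ℝ) :=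
    ⟨fun x y => inner_add_left x y u, fun c x => real_inner_smul_left x u c⟩
  refine ⟨inter_subset_left, hK.inter (convex_hyperplane hlin 0), ?_⟩
  rintro x hx y hy t ht0 ht1 ⟨-, hxy⟩
  rw [mem_ofPred_eq, inner_add_left, real_inner_smul_left, real_inner_smul_left] at hxy
  have hx' := mul_nonneg ht0.le (hu x hx)
  have hy' := mul_nonneg (sub_nonneg.2 ht1.le) (hu y hy)
  obtain ⟨hx0, hy0⟩ := (add_eq_zero_iff_of_nonneg hx' hy').1 hxy
  exact ⟨⟨hx, (mul_eq_zero.1 hx0).resolve_left ht0.ne'⟩,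
    ⟨hy, (mul_eq_zero.1 hy0).resolve_left (sub_ne_zero.2 ht1.ne')⟩⟩

variable [CompleteSpace E]

noncomputable def dualPointedCone (S : Set E) : PointedCone ℝ E := ProperCone.innerDual S

lemma coe_dualPointedCone (S : Set E) : (dualPointedCone S : Set E) = dualCone S := rfl

theorem dualCone_dualCone (C : PointedCone ℝ E) :
    dualCone (dualCone (C : Set E)) = closure C := by
  rw [← dualCone_closure (C : Set E)]
  exact congrArg SetLike.coe (ProperCone.innerDual_innerDual (Submodule.closure C))

lemma dirCone_dualCone_eq_sup {S : Set E} {u : E} (hu : u ∈ dualCone S) :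
    dirCone u (dualCone S) =
      ((dualPointedCone S ⊔ PointedCone.ofSubmodule (ℝ ∙ u) : PointedCone ℝ E) : Set E) := by
  rw [← coe_dualPointedCone]
  exact dirCone_eq_sup_span_singleton hu

variable {C : PointedCone ℝ E} {u : E}

theorem dualCone_inter_orthogonal_eq_closure_dirCone (hC : IsClosed (C : Set E))
    (hu : u ∈ dualCone C) :
    dualCone (C ∩ {z | (inner ℝ z u : ℝ) = 0}) = closure (dirCone u (dualCone C)) := by
  rw [dirCone_dualCone_eq_sup hu, ← dualCone_dualCone, dualCone_sup_span_singleton,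
    coe_dualPointedCone, dualCone_dualCone, hC.closure_eq]

theorem tanSpace_dualCone_eq_perpSpan (hC : IsClosed (C : Set E)) (hu : u ∈ dualCone C) :
    tanSpace u (dualCone C) = perpSpan (C ∩ {z | (inner ℝ z u : ℝ) = 0}) := by
  rw [tanSpace, ← dualCone_inter_orthogonal_eq_closure_dirCone hC hu, dualCone_inter_neg]

lemma dirCone_dualCone_subset_add_perpSpan (hu : u ∈ dualCone C) :
    dirCone u (dualCone C) ⊆ dualCone C + perpSpan (C ∩ {z | (inner ℝ z u : ℝ) = 0}) := by
  rw [dirCone_dualCone_eq_sup hu, Submodule.coe_sup, coe_dualPointedCone]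
  refine add_subset_add_left fun v hv x hx => ?_
  obtain ⟨c, rfl⟩ := Submodule.mem_span_singleton.1 hv
  rw [real_inner_smul_right, hx.2, mul_zero]

end InnerProductSpace
open Pointwise in
theorem stmt15 {E : Type*} [NormedAddCommGroup E] [InnerProductSpace ℝ E]
    [FiniteDimensional ℝ E]
    (K : Set E) (hKclosed : IsClosed K) (hKconv : Convex ℝ K)
    (hKcone : ∀ c : ℝ, 0 ≤ c → ∀ z ∈ K, c • z ∈ K)
    (hnice : ∀ F : Set E, IsFaceOf F K → IsClosed (dualCone K + perpSpan F))
    (u : E) (hu : u ∈ dualCone K) :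
    dualCone (K ∩ {z : E | (inner ℝ z u : ℝ) = 0}) =
      dualCone K + tanSpace u (dualCone K) := by
  rcases K.eq_empty_or_nonempty with rfl | hne
  · have hdual : dualCone (∅ : Set E) = univ := by simp [dualCone]
    have hdir : dirCone u (univ : Set E) = univ :=
      eq_univ_of_forall fun _ => ⟨1, one_pos, trivial⟩
    simp [hdual, hdir, tanSpace]
  obtain ⟨C, rfl⟩ := exists_pointedCone_coe_eq hne hKconv hKcone
  rw [tanSpace_dualCone_eq_perpSpan hKclosed hu]
  refine Subset.antisymm ?_ (add_perpSpan_subset_dualCone inter_subset_left)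
  calc dualCone (C ∩ {z | (inner ℝ z u : ℝ) = 0})
      = closure (dirCone u (dualCone C)) :=
        dualCone_inter_orthogonal_eq_closure_dirCone hKclosed hu
    _ ⊆ closure (dualCone C + perpSpan (C ∩ {z | (inner ℝ z u : ℝ) = 0})) :=
      closure_mono (dirCone_dualCone_subset_add_perpSpan hu)
    _ = _ := (hnice _ (isFaceOf_inter_orthogonal C.convex hu)).closure_eq
end
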